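/- arXiv:2311.18734 — 5 statements merged into one kernel-verified Lean document; each statement's English description precedes it below -/
import Mathlib

section
/- Let (Ω, ℱ, P) be a probability space and (S, 𝒮) a measurable space. Let 𝒢 ⊆ S^ℕ be a measurable set of sequences that is shift-invariant, i.e., for every s ∈ ℕ and every sequence h = (h_t)_{t∈ℕ} ∈ S^ℕ one has h ∈ 𝒢 if and only if (h_{t+s})_{t∈ℕ} ∈ 𝒢. Let (T_k)_{k∈ℕ} be S-valued random variables, let M be an ℕ∪{∞}-valued random variable with P(M < ∞) = 1, and for each j ∈ ℕ let (G^{(j)}_k)_{k∈ℕ} be S-valued random variables satisfying P((G^{(j)}_k)_{k∈ℕ} ∈ 𝒢) = 1. Assume that for every j ∈ ℕ, on the event {M = j} one has T_{j+k} = G^{(j)}_k for all k ∈ ℕ. Then P((T_k)_{k∈ℕ} ∈ 𝒢) = 1. -/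
open MeasureTheory

/-- **Transfer Principle (abstract form).**
Let `(Ω, μ)` be a probability space and `S` a measurable space.  Let `𝒢` be a measurable,
shift-invariant set of `S`-valued sequences.  Let `(T k)` be `S`-valued random variables,
`M` an `ℕ∞`-valued random variable that is almost surely finite, and for each `j` let
`(G j k)_k` be random variables with `P((G j k)_k ∈ 𝒢) = 1`.  If on the event `{M = j}` one
has `T (j + k) = G j k` for all `k`, then `P((T k)_k ∈ 𝒢) = 1`. -/
theorem transfer_principle_abstract
    {Ω : Type*} [MeasurableSpace Ω] (μ : Measure Ω) [IsProbabilityMeasure μ]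
    {S : Type*} [MeasurableSpace S]
    (𝒢 : Set (ℕ → S)) (h𝒢meas : MeasurableSet 𝒢)
    (hshift : ∀ (s : ℕ) (h : ℕ → S), h ∈ 𝒢 ↔ (fun t => h (t + s)) ∈ 𝒢)
    (T : ℕ → Ω → S) (hTmeas : ∀ k, Measurable (T k))
    (M : Ω → ℕ∞)
    (hMmeas : ∀ j : ℕ, MeasurableSet {ω | M ω = (j : ℕ∞)})
    (hMfin : μ {ω | M ω < ⊤} = 1)
    (G : ℕ → ℕ → Ω → S) (hGmeas : ∀ j k, Measurable (G j k))
    (hG : ∀ j : ℕ, μ {ω | (fun k => G j k ω) ∈ 𝒢} = 1)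
    (hagree : ∀ (j : ℕ) (ω : Ω), M ω = (j : ℕ∞) → ∀ k : ℕ, T (j + k) ω = G j k ω) :
    μ {ω | (fun k => T k ω) ∈ 𝒢} = 1 := by
  have hTseq : Measurable (fun ω k => T k ω) := measurable_pi_lambda _ hTmeas
  have hGseq : ∀ j, Measurable (fun ω k => G j k ω) :=
    fun j => measurable_pi_lambda _ (hGmeas j)
  have hset : MeasurableSet {ω | (fun k => T k ω) ∈ 𝒢} := hTseq h𝒢meas
  have hGae : ∀ j, ∀ᵐ ω ∂μ, (fun k => G j k ω) ∈ 𝒢 := by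
    intro j
    rw [ae_iff]
    have hc : {ω | ¬ (fun k => G j k ω) ∈ 𝒢} = {ω | (fun k => G j k ω) ∈ 𝒢}ᶜ := rfl
    rw [hc, prob_compl_eq_zero_iff (show MeasurableSet {ω | (fun k => G j k ω) ∈ 𝒢} from (hGseq j) h𝒢meas)]
    exact hG j
  have hGall : ∀ᵐ ω ∂μ, ∀ j, (fun k => G j k ω) ∈ 𝒢 := ae_all_iff.2 hGae
  have hMset : {ω | M ω < ⊤} = ⋃ j : ℕ, {ω | M ω = (j : ℕ∞)} := by
    ext ω
    simp only [Set.mem_setOf_eq, Set.mem_iUnion, lt_top_iff_ne_top]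
    constructor
    · intro h
      obtain ⟨n, hn⟩ := WithTop.ne_top_iff_exists.1 h
      exact ⟨n, hn.symm⟩
    · rintro ⟨n, hn⟩
      rw [hn]; exact WithTop.coe_ne_top
  have hMae : ∀ᵐ ω ∂μ, M ω < ⊤ := by
    rw [ae_iff]
    have hms : MeasurableSet {ω | M ω < ⊤} := by
      rw [hMset]; exact MeasurableSet.iUnion hMmeas
    have hc : {ω | ¬ M ω < ⊤} = {ω | M ω < ⊤}ᶜ := rfl
    rw [hc, prob_compl_eq_zero_iff hms]
    exact hMfin
  have hfinal : ∀ᵐ ω ∂μ, (fun k => T k ω) ∈ 𝒢 := by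
    filter_upwards [hGall, hMae] with ω hGω hMω
    obtain ⟨j, hj⟩ := WithTop.ne_top_iff_exists.1 hMω.ne
    have hjeq : M ω = (j : ℕ∞) := hj.symm
    rw [hshift j]
    have : (fun t => T (t + j) ω) = fun k => G j k ω := by
      funext t
      rw [add_comm]
      exact hagree j ω hjeq t
    rw [this]
    exact hGω j
  rw [← prob_compl_eq_zero_iff hset]
  rw [ae_iff] at hfinal
  exact hfinal
end

section
/- Let T be a finite tree-with-loop with transition matrix P of the simple random walk on T. Then every eigenvalue λ of P with λ ≠ 1 satisfies |λ| ≤ 1 − 1/((2·diam(T) + 1)·|E|); equivalently, the relaxation time t_rel = (1 − max{|λ| : λ an eigenvalue of P, λ ≠ 1})^{−1} satisfies t_rel ≤ (2·diam(T) + 1)·|E|. -/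
/-!
Let `v ≠ 0` satisfy `P v = λ v` and put `N = ∑ deg x · v x²`. Since `deg x · P x y` is the
symmetric adjacency matrix of the tree plus the loop, `(1 - λ) N` is the sum of `(v x - v y)²`
over the tree edges, and `(1 + λ) N` is the sum of `(v x + v y)²` over the tree edges plus
`2 v(root)²`, the contribution of the loop. Cauchy–Schwarz along the tree path from `x` to `y`
bounds `(v x - v y)²` by `diam · (1 - λ) N`; writing `v x` as the alternating sum of the
`v a + v b` along the path to the root, closed off by `v root`, bounds `v x²` by
`(diam + 1/2)(1 + λ) N`. As `λ ≠ 1` forces `∑ deg x · v x = 0`, averaging the first bound against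
`deg ⊗ deg` and the second against `deg`, with `∑ deg = 2|S| - 1`, gives
`1 - λ ≥ 2 / ((2|S| - 1) diam)` and `1 + λ ≥ 2 / ((2|S| - 1)(2 diam + 1))`.
-/

/-- A finite tree with a self-loop attached at a distinguished root:
a finite tree `g` on at least two vertices together with a root. -/
structure TreeWithLoop (S : Type*) [Fintype S] [DecidableEq S] where
  g : SimpleGraph S
  isTree : g.IsTree
  root : S
  card_ge : 2 ≤ Fintype.card S

namespace TreeWithLoop

variable {S : Type*} [Fintype S] [DecidableEq S]

/-- The degree of a vertex: number of tree edges, plus `1` at the root (the loop counts once). -/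
noncomputable def deg (T : TreeWithLoop S) (x : S) : ℕ :=
  letI : DecidableRel T.g.Adj := Classical.decRel _
  T.g.degree x + (if x = T.root then 1 else 0)

/-- The transition matrix of the simple random walk on the tree with a loop at the root:
`P x y = 1/deg x` for tree edges, `P root root = 1/deg root`, and `0` otherwise. -/
noncomputable def transMatrix (T : TreeWithLoop S) : Matrix S S ℝ :=
  Matrix.of fun x y =>
    letI : DecidableRel T.g.Adj := Classical.decRel _
    if T.g.Adj x y then ((T.deg x : ℝ))⁻¹
    else if x = y ∧ x = T.root then ((T.deg T.root : ℝ))⁻¹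
    else 0

/-- The diameter of the tree: the maximal graph distance between two vertices. -/
noncomputable def diam (T : TreeWithLoop S) : ℕ :=
  Finset.univ.sup fun p : S × S => T.g.dist p.1 p.2

end TreeWithLoop

open Finset SimpleGraph Matrix

lemma add_sq_le_mul_add_of_sq_le_mul {a b t s : ℝ} (ht : 0 ≤ t) (hs : 0 ≤ s)
    (hb : b ^ 2 ≤ t * s) : (a + b) ^ 2 ≤ (t + 1) * (a ^ 2 + s) := by
  rcases ht.eq_or_lt with rfl | ht
  · obtain rfl : b = 0 := pow_eq_zero_iff two_ne_zero |>.1 (by nlinarith [sq_nonneg b])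
    nlinarith
  · have key : t * ((t + 1) * (a ^ 2 + s) - (a + b) ^ 2)
        = (t * a - b) ^ 2 + (t + 1) * (t * s - b ^ 2) := by ring
    have : 0 ≤ t * ((t + 1) * (a ^ 2 + s) - (a + b) ^ 2) := by
      rw [key]; have := sub_nonneg.2 hb; positivity
    exact sub_nonneg.1 (nonneg_of_mul_nonneg_right this ht)

namespace Sym2

variable {V : Type*}

def sqSub (v : V → ℝ) : Sym2 V → ℝ := Sym2.lift ⟨fun a b => (v a - v b) ^ 2, fun _ _ => by ring⟩

def sqAdd (v : V → ℝ) : Sym2 V → ℝ := Sym2.lift ⟨fun a b => (v a + v b) ^ 2, fun _ _ => by ring⟩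

@[simp] lemma sqSub_mk (v : V → ℝ) (a b : V) : sqSub v s(a, b) = (v a - v b) ^ 2 := rfl

@[simp] lemma sqAdd_mk (v : V → ℝ) (a b : V) : sqAdd v s(a, b) = (v a + v b) ^ 2 := rfl

lemma sqSub_nonneg (v : V → ℝ) (e : Sym2 V) : 0 ≤ sqSub v e := by
  induction e using Sym2.ind with | _ a b => exact sq_nonneg _

lemma sqAdd_nonneg (v : V → ℝ) (e : Sym2 V) : 0 ≤ sqAdd v e := by
  induction e using Sym2.ind with | _ a b => exact sq_nonneg _

end Sym2

namespace SimpleGraph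

variable {V : Type*} {G : SimpleGraph V}

lemma Walk.sum_edges_nonneg {x y : V} (p : G.Walk x y) {f : Sym2 V → ℝ} (hf : ∀ e, 0 ≤ f e) :
    0 ≤ (p.edges.map f).sum :=
  List.sum_nonneg (List.forall_mem_map.2 fun e _ => hf e)

lemma Walk.sq_sub_le_length_mul (v : V → ℝ) {x y : V} (p : G.Walk x y) :
    (v x - v y) ^ 2 ≤ p.length * (p.edges.map (Sym2.sqSub v)).sum := by
  induction p with
  | nil => simp
  | @cons a b c _ q ih =>
    have := add_sq_le_mul_add_of_sq_le_mul (a := v a - v b) (Nat.cast_nonneg _)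
      (q.sum_edges_nonneg (Sym2.sqSub_nonneg v)) ih
    simp only [Walk.length_cons, Walk.edges_cons, List.map_cons, List.sum_cons, Sym2.sqSub_mk,
      Nat.cast_succ]
    convert this using 2
    ring

lemma Walk.sq_le_length_add_half_mul (v : V → ℝ) {x y : V} (p : G.Walk x y) :
    v x ^ 2 ≤ (p.length + 1 / 2) * ((p.edges.map (Sym2.sqAdd v)).sum + 2 * v y ^ 2) := by
  induction p with
  | nil => simp
  | @cons a b c _ q ih =>
    have := add_sq_le_mul_add_of_sq_le_mul (a := v a + v b) (b := -v b)
      (t := q.length + 1 / 2) (s := (q.edges.map (Sym2.sqAdd v)).sum + 2 * v c ^ 2)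
      (by positivity) (add_nonneg (q.sum_edges_nonneg (Sym2.sqAdd_nonneg v)) (by positivity))
      (by simpa using ih)
    simp only [Walk.length_cons, Walk.edges_cons, List.map_cons, List.sum_cons, Sym2.sqAdd_mk,
      Nat.cast_succ]
    convert this using 1 <;> ring

lemma Walk.IsTrail.sum_edges_le [DecidableEq V] [Fintype G.edgeSet] {x y : V} {p : G.Walk x y}
    (hp : p.IsTrail) {f : Sym2 V → ℝ} (hf : ∀ e, 0 ≤ f e) :
    (p.edges.map f).sum ≤ ∑ e ∈ G.edgeFinset, f e := by
  rw [← List.sum_toFinset f hp.edges_nodup]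
  exact sum_le_sum_of_subset_of_nonneg
    (fun e he => mem_edgeFinset.2 (p.edges_subset_edgeSet (List.mem_toFinset.1 he)))
    fun e _ _ => hf e

section Connected

variable [DecidableEq V] [Fintype G.edgeSet] (v : V → ℝ)

lemma Connected.sq_sub_le_dist_mul (hG : G.Connected) (x y : V) :
    (v x - v y) ^ 2 ≤ G.dist x y * ∑ e ∈ G.edgeFinset, Sym2.sqSub v e := by
  obtain ⟨p, hp, hlen⟩ := hG.exists_path_of_dist x y
  calc (v x - v y) ^ 2 ≤ p.length * (p.edges.map (Sym2.sqSub v)).sum := p.sq_sub_le_length_mul v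
    _ ≤ G.dist x y * ∑ e ∈ G.edgeFinset, Sym2.sqSub v e := by
      rw [hlen]
      exact mul_le_mul_of_nonneg_left (hp.isTrail.sum_edges_le (Sym2.sqSub_nonneg v))
        (Nat.cast_nonneg _)

lemma Connected.sq_le_dist_add_half_mul (hG : G.Connected) (x y : V) :
    v x ^ 2 ≤ (G.dist x y + 1 / 2) * (∑ e ∈ G.edgeFinset, Sym2.sqAdd v e + 2 * v y ^ 2) := by
  obtain ⟨p, hp, hlen⟩ := hG.exists_path_of_dist x y
  calc v x ^ 2 ≤ (p.length + 1 / 2) * ((p.edges.map (Sym2.sqAdd v)).sum + 2 * v y ^ 2) :=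
        p.sq_le_length_add_half_mul v
    _ ≤ (G.dist x y + 1 / 2) * (∑ e ∈ G.edgeFinset, Sym2.sqAdd v e + 2 * v y ^ 2) := by
      rw [hlen]
      gcongr
      exact hp.isTrail.sum_edges_le (Sym2.sqAdd_nonneg v)

end Connected

lemma sum_sum_adjMatrix_mul [Fintype V] (G : SimpleGraph V) [DecidableRel G.Adj]
    (f : Sym2 V → ℝ) :
    ∑ x, ∑ y, G.adjMatrix ℝ x y * f s(x, y) = 2 * ∑ e ∈ G.edgeFinset, f e := by
  classical
  have darts : ∑ x, ∑ y, G.adjMatrix ℝ x y * f s(x, y) = ∑ d : G.Dart, f d.edge := by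
    simp only [adjMatrix_apply, ite_mul, one_mul, zero_mul]
    rw [← Fintype.sum_prod_type' (f := fun x y => if G.Adj x y then f s(x, y) else 0),
      ← sum_filter]
    exact sum_bij' (fun p hp => ⟨p, (mem_filter.1 hp).2⟩) (fun d _ => d.toProd)
      (by simp) (by simp [Dart.adj]) (by simp) (by simp) (by simp)
  rw [darts, ← sum_fiberwise_of_maps_to (g := Dart.edge) (t := G.edgeFinset)
    fun d _ => mem_edgeFinset.2 d.edge_mem, mul_sum]
  refine sum_congr rfl fun e he => ?_
  rw [sum_congr rfl fun d hd => congrArg f (mem_filter.1 hd).2, sum_const,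
    G.dart_edge_fiber_card e (mem_edgeFinset.1 he), nsmul_eq_mul, Nat.cast_two]

end SimpleGraph

namespace Matrix.IsSymm

variable {ι : Type*} [Fintype ι] {W : Matrix ι ι ℝ} (hW : W.IsSymm) (v : ι → ℝ)
include hW

lemma sum_mulVec : ∑ x, (W *ᵥ v) x = ∑ x, (∑ y, W x y) * v x := by
  simp only [mulVec, dotProduct, sum_mul]
  rw [sum_comm]
  exact sum_congr rfl fun x _ => sum_congr rfl fun y _ => by rw [hW.apply y x]

lemma sum_sum_mul_sq_right : ∑ x, ∑ y, W x y * v y ^ 2 = ∑ x, (∑ y, W x y) * v x ^ 2 := by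
  simpa only [mulVec, dotProduct] using hW.sum_mulVec fun x => v x ^ 2

lemma sum_sum_mul_sub_sq :
    ∑ x, ∑ y, W x y * (v x - v y) ^ 2 = 2 * (∑ x, (∑ y, W x y) * v x ^ 2 - v ⬝ᵥ W *ᵥ v) := by
  have expand : ∀ x y, W x y * (v x - v y) ^ 2
      = W x y * v x ^ 2 + W x y * v y ^ 2 - 2 * (v x * (W x y * v y)) := fun x y => by ring
  simp only [expand, sum_add_distrib, sum_sub_distrib, ← sum_mul, ← mul_sum,
    hW.sum_sum_mul_sq_right, dotProduct, mulVec]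
  ring

lemma sum_sum_mul_add_sq :
    ∑ x, ∑ y, W x y * (v x + v y) ^ 2 = 2 * (∑ x, (∑ y, W x y) * v x ^ 2 + v ⬝ᵥ W *ᵥ v) := by
  have expand : ∀ x y, W x y * (v x + v y) ^ 2
      = W x y * v x ^ 2 + W x y * v y ^ 2 + 2 * (v x * (W x y * v y)) := fun x y => by ring
  simp only [expand, sum_add_distrib, ← sum_mul, ← mul_sum,
    hW.sum_sum_mul_sq_right, dotProduct, mulVec]
  ring

end Matrix.IsSymm

section Variance

variable {ι : Type*} [Fintype ι]

lemma sum_sum_mul_mul_sub_sq (d v : ι → ℝ) :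
    ∑ x, ∑ y, d x * d y * (v x - v y) ^ 2
      = 2 * ((∑ x, d x) * ∑ x, d x * v x ^ 2 - (∑ x, d x * v x) ^ 2) := by
  have expand : ∀ x y, d x * d y * (v x - v y) ^ 2
      = d x * v x ^ 2 * d y + d x * (d y * v y ^ 2) - 2 * (d x * v x) * (d y * v y) :=
    fun x y => by ring
  simp only [expand, sum_add_distrib, sum_sub_distrib, ← sum_mul, ← mul_sum]
  ring

variable {d v : ι → ℝ}

lemma two_le_sum_mul_of_sq_sub_le {c : ℝ} (hd : ∀ x, 0 ≤ d x) (hZ : 0 < ∑ x, d x)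
    (hN : 0 < ∑ x, d x * v x ^ 2) (hM : ∑ x, d x * v x = 0)
    (hv : ∀ x y, (v x - v y) ^ 2 ≤ c * ∑ x, d x * v x ^ 2) : 2 ≤ (∑ x, d x) * c := by
  set Z := ∑ x, d x
  set N := ∑ x, d x * v x ^ 2
  have : 2 * Z * N ≤ Z ^ 2 * c * N :=
    calc 2 * Z * N = ∑ x, ∑ y, d x * d y * (v x - v y) ^ 2 := by
          rw [sum_sum_mul_mul_sub_sq, hM]; ring
      _ ≤ ∑ x, ∑ y, d x * d y * (c * N) :=
          sum_le_sum fun x _ => sum_le_sum fun y _ =>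
            mul_le_mul_of_nonneg_left (hv x y) (mul_nonneg (hd x) (hd y))
      _ = Z ^ 2 * c * N := by simp only [← sum_mul, ← mul_sum]; ring
  nlinarith [mul_pos hZ hN]

lemma one_le_sum_mul_of_sq_le {c : ℝ} (hd : ∀ x, 0 ≤ d x) (hN : 0 < ∑ x, d x * v x ^ 2)
    (hv : ∀ x, v x ^ 2 ≤ c * ∑ x, d x * v x ^ 2) : 1 ≤ (∑ x, d x) * c := by
  have : ∑ x, d x * v x ^ 2 ≤ (∑ x, d x) * c * ∑ x, d x * v x ^ 2 :=
    calc ∑ x, d x * v x ^ 2 ≤ ∑ x, d x * (c * ∑ x, d x * v x ^ 2) :=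
          sum_le_sum fun x _ => mul_le_mul_of_nonneg_left (hv x) (hd x)
      _ = (∑ x, d x) * c * ∑ x, d x * v x ^ 2 := by rw [← sum_mul]; ring
  nlinarith

end Variance

lemma abs_le_one_sub_one_div_of_gaps {lam D n : ℝ} (hn : 1 ≤ n) (hD : 0 ≤ D)
    (h₁ : 2 ≤ (2 * n - 1) * (D * (1 - lam)))
    (h₂ : 1 ≤ (2 * n - 1) * ((D + 1 / 2) * (1 + lam))) :
    |lam| ≤ 1 - 1 / ((2 * D + 1) * n) := by
  have ht : 0 < (2 * D + 1) * n := by positivity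
  have hZ : 0 ≤ 2 * n - 1 := by linarith
  have hsub : 0 ≤ 1 - lam := by nlinarith [mul_nonneg hZ hD]
  have hadd : 0 ≤ 1 + lam := by nlinarith [mul_nonneg hZ (by linarith : 0 ≤ D + 1 / 2)]
  have h₁' : 1 / ((2 * D + 1) * n) ≤ 1 - lam := (div_le_iff₀ ht).2 (by nlinarith)
  have h₂' : 1 / ((2 * D + 1) * n) ≤ 1 + lam := (div_le_iff₀ ht).2 (by nlinarith)
  rw [abs_le]
  constructor <;> linarith

namespace TreeWithLoop

variable {S : Type*} [Fintype S] [DecidableEq S] (T : TreeWithLoop S)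

lemma deg_eq [DecidableRel T.g.Adj] (x : S) :
    T.deg x = T.g.degree x + if x = T.root then 1 else 0 := by
  unfold deg
  convert rfl

lemma deg_pos (x : S) : 0 < T.deg x := by
  classical
  have : Nontrivial S := Fintype.one_lt_card_iff_nontrivial.1 T.card_ge
  rw [T.deg_eq]
  exact Nat.add_pos_left (T.isTree.connected.preconnected.degree_pos_of_nontrivial x) _

lemma sum_deg : ∑ x, (T.deg x : ℝ) = 2 * Fintype.card S - 1 := by
  classical
  have hE : (#T.g.edgeFinset : ℝ) + 1 = Fintype.card S := by
    exact_mod_cast T.isTree.card_edgeFinset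
  simp only [T.deg_eq, Nat.cast_add, sum_add_distrib, ← Nat.cast_sum,
    sum_degrees_eq_twice_card_edges, Nat.cast_ite, Nat.cast_one, Nat.cast_zero, sum_ite_eq',
    mem_univ, if_true]
  push_cast
  linarith

lemma dist_le_diam (x y : S) : T.g.dist x y ≤ T.diam :=
  le_sup (f := fun p : S × S => T.g.dist p.1 p.2) (mem_univ (x, y))

section LoopAdjMatrix

variable [DecidableRel T.g.Adj]

def loopAdjMatrix : Matrix S S ℝ := T.g.adjMatrix ℝ + single T.root T.root 1

lemma loopAdjMatrix_isSymm : T.loopAdjMatrix.IsSymm :=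
  T.g.isSymm_adjMatrix.add (transpose_single _ _ _)

lemma sum_loopAdjMatrix_apply (x : S) : ∑ y, T.loopAdjMatrix x y = T.deg x := by
  simp [loopAdjMatrix, sum_add_distrib, adjMatrix_apply, ← neighborFinset_eq_filter,
    single_apply, ite_and, @eq_comm _ x, T.deg_eq]

lemma sum_sum_loopAdjMatrix_mul (φ : S → S → ℝ) :
    ∑ x, ∑ y, T.loopAdjMatrix x y * φ x y
      = ∑ x, ∑ y, T.g.adjMatrix ℝ x y * φ x y + φ T.root T.root := by
  simp [loopAdjMatrix, add_mul, sum_add_distrib, single_apply, ite_and]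

lemma diagonal_deg_mul_transMatrix :
    diagonal (fun x => (T.deg x : ℝ)) * T.transMatrix = T.loopAdjMatrix := by
  ext x y
  have hdeg : (T.deg x : ℝ) ≠ 0 := Nat.cast_ne_zero.2 (T.deg_pos x).ne'
  rw [diagonal_mul]
  by_cases hxy : T.g.Adj x y
  · have : ¬(T.root = x ∧ T.root = y) := fun h => T.g.irrefl (h.1 ▸ h.2 ▸ hxy)
    simp [transMatrix, loopAdjMatrix, hxy, hdeg, this]
  · by_cases hx : x = y ∧ x = T.root
    · obtain ⟨rfl, rfl⟩ := hx
      simp [transMatrix, loopAdjMatrix, hdeg]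
    · have : ¬(T.root = x ∧ T.root = y) := fun h => hx ⟨h.1 ▸ h.2, h.1.symm⟩
      simp [transMatrix, loopAdjMatrix, hxy, hx, this]

section Eigenvector

variable {v : S → ℝ} {lam : ℝ} (heig : T.transMatrix *ᵥ v = lam • v)
include heig

lemma loopAdjMatrix_mulVec : T.loopAdjMatrix *ᵥ v = lam • fun x => (T.deg x : ℝ) * v x := by
  rw [← diagonal_deg_mul_transMatrix, ← mulVec_mulVec, heig, mulVec_smul]
  ext x
  simp [mulVec_diagonal]

lemma dotProduct_loopAdjMatrix_mulVec :
    v ⬝ᵥ T.loopAdjMatrix *ᵥ v = lam * ∑ x, (T.deg x : ℝ) * v x ^ 2 := by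
  simp only [T.loopAdjMatrix_mulVec heig, dotProduct, Pi.smul_apply, smul_eq_mul, mul_sum]
  exact sum_congr rfl fun x _ => by ring

lemma sum_deg_mul_eq_zero (hlam : lam ≠ 1) : ∑ x, (T.deg x : ℝ) * v x = 0 := by
  have h := T.loopAdjMatrix_isSymm.sum_mulVec v
  simp only [T.loopAdjMatrix_mulVec heig, T.sum_loopAdjMatrix_apply, Pi.smul_apply, smul_eq_mul,
    ← mul_sum] at h
  exact (mul_eq_zero.1 (by linarith : (1 - lam) * ∑ x, (T.deg x : ℝ) * v x = 0)).resolve_left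
    (sub_ne_zero.2 hlam.symm)

lemma sum_edgeFinset_sqSub :
    ∑ e ∈ T.g.edgeFinset, Sym2.sqSub v e = (1 - lam) * ∑ x, (T.deg x : ℝ) * v x ^ 2 := by
  have h := T.loopAdjMatrix_isSymm.sum_sum_mul_sub_sq v
  rw [T.sum_sum_loopAdjMatrix_mul, T.dotProduct_loopAdjMatrix_mulVec heig] at h
  simp only [T.sum_loopAdjMatrix_apply, sub_self, zero_pow two_ne_zero, add_zero] at h
  have := T.g.sum_sum_adjMatrix_mul (Sym2.sqSub v)
  simp only [Sym2.sqSub_mk] at this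
  linarith

lemma sum_edgeFinset_sqAdd :
    ∑ e ∈ T.g.edgeFinset, Sym2.sqAdd v e + 2 * v T.root ^ 2
      = (1 + lam) * ∑ x, (T.deg x : ℝ) * v x ^ 2 := by
  have h := T.loopAdjMatrix_isSymm.sum_sum_mul_add_sq v
  rw [T.sum_sum_loopAdjMatrix_mul, T.dotProduct_loopAdjMatrix_mulVec heig] at h
  simp only [T.sum_loopAdjMatrix_apply] at h
  have := T.g.sum_sum_adjMatrix_mul (Sym2.sqAdd v)
  simp only [Sym2.sqAdd_mk] at this
  linarith

end Eigenvector

end LoopAdjMatrix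

variable {v : S → ℝ} {lam : ℝ}

lemma sq_sub_le_diam_mul (heig : T.transMatrix *ᵥ v = lam • v) (x y : S) :
    (v x - v y) ^ 2 ≤ T.diam * (1 - lam) * ∑ x, (T.deg x : ℝ) * v x ^ 2 := by
  classical
  calc (v x - v y) ^ 2 ≤ T.g.dist x y * ∑ e ∈ T.g.edgeFinset, Sym2.sqSub v e :=
        T.isTree.connected.sq_sub_le_dist_mul v x y
    _ ≤ T.diam * ∑ e ∈ T.g.edgeFinset, Sym2.sqSub v e :=
        mul_le_mul_of_nonneg_right (Nat.cast_le.2 (T.dist_le_diam x y))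
          (sum_nonneg fun e _ => Sym2.sqSub_nonneg v e)
    _ = T.diam * (1 - lam) * ∑ x, (T.deg x : ℝ) * v x ^ 2 := by
        rw [T.sum_edgeFinset_sqSub heig, mul_assoc]

lemma sq_le_diam_add_half_mul (heig : T.transMatrix *ᵥ v = lam • v) (x : S) :
    v x ^ 2 ≤ (T.diam + 1 / 2) * (1 + lam) * ∑ x, (T.deg x : ℝ) * v x ^ 2 := by
  classical
  calc v x ^ 2 ≤ (T.g.dist x T.root + 1 / 2)
        * (∑ e ∈ T.g.edgeFinset, Sym2.sqAdd v e + 2 * v T.root ^ 2) :=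
        T.isTree.connected.sq_le_dist_add_half_mul v x T.root
    _ ≤ (T.diam + 1 / 2) * (∑ e ∈ T.g.edgeFinset, Sym2.sqAdd v e + 2 * v T.root ^ 2) := by
        gcongr
        · exact add_nonneg (sum_nonneg fun e _ => Sym2.sqAdd_nonneg v e) (by positivity)
        · exact T.dist_le_diam x T.root
    _ = (T.diam + 1 / 2) * (1 + lam) * ∑ x, (T.deg x : ℝ) * v x ^ 2 := by
        rw [T.sum_edgeFinset_sqAdd heig, mul_assoc]

lemma sum_deg_mul_sq_pos (hv : v ≠ 0) : 0 < ∑ x, (T.deg x : ℝ) * v x ^ 2 := by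
  obtain ⟨x, hx⟩ := Function.ne_iff.1 hv
  exact sum_pos' (fun y _ => by positivity)
    ⟨x, mem_univ x, mul_pos (Nat.cast_pos.2 (T.deg_pos x)) (pow_two_pos_of_ne_zero hx)⟩

end TreeWithLoop

/-- **Relaxation time bound.** For the simple random walk on a finite tree-with-loop `T`,
every eigenvalue `λ ≠ 1` of the transition matrix satisfies
`|λ| ≤ 1 - 1/((2 diam T + 1) |E|)`, where `|E| = |S|` is the number of edges (loop included);
equivalently, `t_rel ≤ (2 diam T + 1) |E|`. -/
theorem eigenvalue_abs_bound_of_treeWithLoop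
    {S : Type*} [Fintype S] [DecidableEq S] (T : TreeWithLoop S)
    (lam : ℝ) (v : S → ℝ) (hv : v ≠ 0)
    (heig : T.transMatrix.mulVec v = lam • v) (hlam : lam ≠ 1) :
    |lam| ≤ 1 - 1 / ((2 * (T.diam : ℝ) + 1) * (Fintype.card S : ℝ)) := by
  classical
  have hn : (1 : ℝ) ≤ Fintype.card S := by exact_mod_cast T.card_ge.trans' one_le_two
  have hdeg : ∀ x, (0 : ℝ) ≤ T.deg x := fun x => Nat.cast_nonneg _
  have hgap₁ := two_le_sum_mul_of_sq_sub_le hdeg (by rw [T.sum_deg]; linarith)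
    (T.sum_deg_mul_sq_pos hv) (T.sum_deg_mul_eq_zero heig hlam) (T.sq_sub_le_diam_mul heig)
  have hgap₂ := one_le_sum_mul_of_sq_le hdeg (T.sum_deg_mul_sq_pos hv)
    (T.sq_le_diam_add_half_mul heig)
  rw [T.sum_deg] at hgap₁ hgap₂
  exact abs_le_one_sub_one_div_of_gaps hn (Nat.cast_nonneg _) hgap₁ hgap₂
end

section
/- Let T be a finite tree-with-loop with transition matrix P of the simple random walk on T, and let λ_min denote the smallest eigenvalue of P. Then λ_min ≥ −1 + 1/((2·diam(T) + 1)·|E|). -/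
section Helpers

open Finset SimpleGraph

/-- Telescoping along a walk. -/
private lemma tele_abs {V : Type*} {G : SimpleGraph V} (v : V → ℝ) :
    ∀ {a b : V} (w : G.Walk a b),
      |v a| ≤ (w.darts.map fun d => |v d.fst + v d.snd|).sum + |v b| := by
  intro a b w
  induction w with
  | nil => simp
  | @cons a c b h p ih =>
    rw [SimpleGraph.Walk.darts_cons, List.map_cons, List.sum_cons]
    have h1 : |v a| ≤ |v a + v c| + |v c| := by
      have := abs_add_le (v a + v c) (-(v c))
      simpa using this
    linarith

/-- Numeric Cauchy–Schwarz combination. -/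
private lemma cs_combine (X Y Q k : ℝ) (hX : 0 ≤ X) (_hY : 0 ≤ Y) (hQ : 0 ≤ Q) (hk : 0 ≤ k)
    (hX2 : X ^ 2 ≤ k * Q) : (X + Y) ^ 2 ≤ (2 * k + 1) * (Q / 2 + Y ^ 2) := by
  rcases eq_or_lt_of_le hk with hk0 | hkpos
  · have hX0 : X = 0 := by nlinarith [sq_nonneg X]
    subst hX0
    nlinarith
  · have key : 0 ≤ (2 * k + 1) * (k * Q - X ^ 2) :=
      mul_nonneg (by linarith) (by linarith)
    nlinarith [sq_nonneg (X - 2 * k * Y), mul_pos hkpos hkpos]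

/-- Sum over darts equals the indicator double sum over ordered pairs. -/
private lemma sum_darts_eq {S : Type*} [Fintype S] [DecidableEq S]
    (G : SimpleGraph S) [DecidableRel G.Adj] (f : S → S → ℝ) :
    ∑ d : G.Dart, f d.fst d.snd = ∑ x, ∑ y, if G.Adj x y then f x y else 0 := by
  have h : ∑ x, ∑ y, (if G.Adj x y then f x y else 0)
      = ∑ p ∈ Finset.univ.filter (fun p : S × S => G.Adj p.1 p.2), f p.1 p.2 := by
    rw [Finset.sum_filter, Fintype.sum_prod_type]
  rw [h]
  refine Finset.sum_bij' (fun d _ => d.toProd)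
    (fun p hp => ⟨p, (Finset.mem_filter.mp hp).2⟩) ?_ ?_ ?_ ?_ ?_ <;>
    simp +contextual [Finset.mem_filter]

end Helpers

/-- **Lower bound on the smallest eigenvalue.** For the simple random walk on a finite
tree-with-loop `T`, every (real) eigenvalue of the transition matrix is at least
`-1 + 1/((2 diam T + 1)·|E|)` (with `|E| = |S|`); in particular this bounds the smallest
eigenvalue `λ_min` from below. -/
theorem smallest_eigenvalue_bound_of_treeWithLoop
    {S : Type*} [Fintype S] [DecidableEq S] (T : TreeWithLoop S)
    (lam : ℝ) (v : S → ℝ) (hv : v ≠ 0)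
    (heig : T.transMatrix.mulVec v = lam • v) :
    -1 + 1 / ((2 * (T.diam : ℝ) + 1) * (Fintype.card S : ℝ)) ≤ lam := by
  classical
  letI instAdj : DecidableRel T.g.Adj := Classical.decRel _
  -- every vertex has positive degree
  have hdegnat : ∀ x : S, 1 ≤ T.deg x := by
    intro x
    by_cases hx : x = T.root
    · simp [TreeWithLoop.deg, hx]
    · obtain ⟨y, hy⟩ := Fintype.exists_ne_of_one_lt_card
        (by have := T.card_ge; omega : 1 < Fintype.card S) x
      obtain ⟨w⟩ := T.isTree.isConnected x y
      cases w with
      | nil => exact absurd rfl (Ne.symm hy)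
      | cons h p =>
        have : 0 < T.g.degree x := by
          rw [T.g.degree_pos_iff_exists_adj x]; exact ⟨_, h⟩
        simp only [TreeWithLoop.deg]
        omega
  have hdegpos : ∀ x : S, (0 : ℝ) < (T.deg x : ℝ) := by
    intro x; exact_mod_cast Nat.lt_of_lt_of_le Nat.zero_lt_one (hdegnat x)
  -- the (unnormalized) adjacency-with-loop matrix
  set A : S → S → ℝ := fun x y =>
    (if T.g.Adj x y then (1 : ℝ) else 0) + (if x = y ∧ x = T.root then 1 else 0) with hA
  have hAnonneg : ∀ x y, 0 ≤ A x y := by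
    intro x y; simp only [hA]; positivity
  have hAP : ∀ x y, A x y = (T.deg x : ℝ) * T.transMatrix x y := by
    intro x y
    simp only [hA, TreeWithLoop.transMatrix, Matrix.of_apply]
    by_cases hadj : T.g.Adj x y
    · have hne : ¬(x = y ∧ x = T.root) := fun ⟨h1, _⟩ => T.g.irrefl (h1 ▸ hadj)
      rw [if_pos hadj, if_pos hadj, if_neg hne, add_zero,
        mul_inv_cancel₀ (ne_of_gt (hdegpos x))]
    · by_cases hxy : x = y ∧ x = T.root
      · have h2 := hxy.2
        rw [if_neg hadj, if_neg hadj, if_pos hxy, if_pos hxy, zero_add, h2,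
          mul_inv_cancel₀ (ne_of_gt (hdegpos T.root))]
      · rw [if_neg hadj, if_neg hadj, if_neg hxy, if_neg hxy, mul_zero, add_zero]
  have hAsymm : ∀ x y, A x y = A y x := by
    intro x y
    simp only [hA]
    rw [if_congr (T.g.adj_comm x y) rfl rfl,
      if_congr (show (x = y ∧ x = T.root) ↔ (y = x ∧ y = T.root) by
        constructor <;> (rintro ⟨rfl, h⟩; exact ⟨rfl, h⟩)) rfl rfl]
  have hArow : ∀ x, ∑ y, A x y = (T.deg x : ℝ) := by
    intro x
    rw [Finset.sum_add_distrib]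
    have h1 : ∑ y, (if T.g.Adj x y then (1 : ℝ) else 0) = (T.g.degree x : ℝ) := by
      rw [Finset.sum_boole, ← SimpleGraph.neighborFinset_eq_filter,
        SimpleGraph.card_neighborFinset_eq_degree]
    have h2 : ∑ y, (if x = y ∧ x = T.root then (1 : ℝ) else 0)
        = if x = T.root then 1 else 0 := by
      by_cases hx : x = T.root
      · subst hx
        simp
      · simp [hx]
    rw [h1, h2]
    simp only [TreeWithLoop.deg]
    push_cast [apply_ite (Nat.cast : ℕ → ℝ)]
    ring
  -- the eigenvalue equation, in A-form
  have heig' : ∀ x, ∑ y, A x y * v y = (T.deg x : ℝ) * (lam * v x) := by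
    intro x
    have hx := congrFun heig x
    simp only [Matrix.mulVec, dotProduct, Pi.smul_apply, smul_eq_mul] at hx
    calc ∑ y, A x y * v y = ∑ y, (T.deg x : ℝ) * (T.transMatrix x y * v y) := by
          refine Finset.sum_congr rfl fun y _ => ?_
          rw [hAP x y]; ring
      _ = (T.deg x : ℝ) * ∑ y, T.transMatrix x y * v y := by rw [Finset.mul_sum]
      _ = (T.deg x : ℝ) * (lam * v x) := by rw [hx]
  set Dm := ∑ x, (T.deg x : ℝ) * (v x) ^ 2 with hDm
  -- quadratic form identity
  have hS3 : ∑ x, ∑ y, A x y * (v y) ^ 2 = Dm := by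
    rw [Finset.sum_comm]
    refine Finset.sum_congr rfl fun y _ => ?_
    have h : ∀ x, A x y * (v y) ^ 2 = A y x * (v y) ^ 2 := fun x => by rw [hAsymm]
    rw [Finset.sum_congr rfl fun x _ => h x, ← Finset.sum_mul, hArow]
  have hM : ∑ x, ∑ y, A x y * (v x + v y) ^ 2 = 2 * (1 + lam) * Dm := by
    have expand : ∀ x y, A x y * (v x + v y) ^ 2
        = A x y * (v x) ^ 2 + 2 * (v x * (A x y * v y)) + A x y * (v y) ^ 2 := by
      intro x y; ring
    have hinner : ∀ x, ∑ y, A x y * (v x + v y) ^ 2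
        = (T.deg x : ℝ) * (v x) ^ 2 + 2 * (v x * ((T.deg x : ℝ) * (lam * v x)))
          + ∑ y, A x y * (v y) ^ 2 := by
      intro x
      rw [Finset.sum_congr rfl fun y _ => expand x y, Finset.sum_add_distrib,
        Finset.sum_add_distrib, ← Finset.sum_mul, hArow, ← Finset.mul_sum,
        ← Finset.mul_sum, heig']
    rw [Finset.sum_congr rfl fun x _ => hinner x, Finset.sum_add_distrib,
      Finset.sum_add_distrib, hS3]
    have hmid : ∑ x, 2 * (v x * ((T.deg x : ℝ) * (lam * v x)))
        = 2 * lam * Dm := by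
      rw [hDm, Finset.mul_sum]
      exact Finset.sum_congr rfl fun x _ => by ring
    rw [hmid, ← hDm]
    ring
  -- split off the loop term: the dart sum
  set TD := ∑ d : T.g.Dart, (v d.fst + v d.snd) ^ 2 with hTD
  have hTDnonneg : 0 ≤ TD := Finset.sum_nonneg fun d _ => sq_nonneg _
  have hMsplit : ∑ x, ∑ y, A x y * (v x + v y) ^ 2 = TD + 4 * (v T.root) ^ 2 := by
    have h1 : ∀ x y, A x y * (v x + v y) ^ 2
        = (if T.g.Adj x y then (v x + v y) ^ 2 else 0)
          + (if x = y ∧ x = T.root then (v x + v y) ^ 2 else 0) := by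
      intro x y
      simp only [hA]
      by_cases hadj : T.g.Adj x y <;> by_cases hxy : x = y ∧ x = T.root <;>
        simp [hadj, hxy] <;> ring
    have h2 : ∀ x : S, ∑ y, (if x = y ∧ x = T.root then (v x + v y) ^ 2 else 0)
        = if x = T.root then (v x + v x) ^ 2 else 0 := by
      intro x
      by_cases hx : x = T.root
      · subst hx
        simp
      · simp [hx]
    calc ∑ x, ∑ y, A x y * (v x + v y) ^ 2
        = (∑ x, ∑ y, if T.g.Adj x y then (v x + v y) ^ 2 else 0)
          + ∑ x, ∑ y, (if x = y ∧ x = T.root then (v x + v y) ^ 2 else 0) := by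
          rw [← Finset.sum_add_distrib]
          refine Finset.sum_congr rfl fun x _ => ?_
          rw [← Finset.sum_add_distrib]
          exact Finset.sum_congr rfl fun y _ => h1 x y
      _ = TD + 4 * (v T.root) ^ 2 := by
          rw [hTD, sum_darts_eq T.g (fun x y => (v x + v y) ^ 2)]
          congr 1
          rw [Finset.sum_congr rfl fun x _ => h2 x]
          rw [Finset.sum_ite_eq' Finset.univ T.root (fun x => (v x + v x) ^ 2)]
          simp
          ring
  have hMD : TD + 4 * (v T.root) ^ 2 = 2 * (1 + lam) * Dm := by rw [← hMsplit, hM]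
  -- per-vertex bound
  have hvertex : ∀ x : S,
      (v x) ^ 2 ≤ (2 * (T.diam : ℝ) + 1) * (TD + 4 * (v T.root) ^ 2) / 4 := by
    intro x
    obtain ⟨w, hw⟩ := T.isTree.isConnected.exists_walk_length_eq_dist x T.root
    have hpath : w.IsPath := w.isPath_of_length_eq_dist hw
    have hklediam : w.length ≤ T.diam := by
      rw [hw]
      exact Finset.le_sup (f := fun p : S × S => T.g.dist p.1 p.2)
        (Finset.mem_univ (x, T.root))
    have hnd : w.darts.Nodup := by
      have h := hpath.isTrail.edges_nodup
      rw [SimpleGraph.Walk.edges] at h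
      exact h.of_map _
    set Fd := w.darts.toFinset with hFd
    have hcard : Fd.card = w.length := by
      rw [hFd, List.toFinset_card_of_nodup hnd, SimpleGraph.Walk.length_darts]
    set X := (w.darts.map fun d => |v d.fst + v d.snd|).sum with hX
    set Y := |v T.root| with hY
    set Q := ∑ d ∈ Fd, (v d.fst + v d.snd) ^ 2 with hQ
    have htele : |v x| ≤ X + Y := tele_abs v w
    have hXF : X = ∑ d ∈ Fd, |v d.fst + v d.snd| :=
      (List.sum_toFinset _ hnd).symm
    have hX0 : 0 ≤ X := by
      rw [hXF]; exact Finset.sum_nonneg fun d _ => abs_nonneg _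
    have hQ0 : 0 ≤ Q := Finset.sum_nonneg fun d _ => sq_nonneg _
    have hCS : X ^ 2 ≤ (w.length : ℝ) * Q := by
      rw [hXF]
      have h := sq_sum_le_card_mul_sum_sq (s := Fd) (f := fun d => |v d.fst + v d.snd|)
      simp only [sq_abs] at h
      calc (∑ d ∈ Fd, |v d.fst + v d.snd|) ^ 2
          ≤ (Fd.card : ℝ) * ∑ d ∈ Fd, (v d.fst + v d.snd) ^ 2 := h
        _ = (w.length : ℝ) * Q := by rw [hcard]
    -- doubling: 2 Q ≤ TD
    have h2Q : 2 * Q ≤ TD := by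
      have hdij : Disjoint Fd (Fd.image SimpleGraph.Dart.symm) := by
        rw [Finset.disjoint_left]
        rintro d hd hd'
        obtain ⟨d2, hd2, hd2s⟩ := Finset.mem_image.mp hd'
        rw [hFd, List.mem_toFinset] at hd hd2
        have hedge : SimpleGraph.Dart.edge d2 = SimpleGraph.Dart.edge d := by
          rw [← hd2s, SimpleGraph.Dart.edge_symm]
        have hd2d : d2 = d := by
          have hmap : (List.map SimpleGraph.Dart.edge w.darts).Nodup :=
            hpath.isTrail.edges_nodup
          exact List.inj_on_of_nodup_map hmap hd2 hd hedge
        rw [hd2d] at hd2s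
        exact SimpleGraph.Dart.symm_ne d hd2s
      have hQ' : ∑ d ∈ Fd.image SimpleGraph.Dart.symm, (v d.fst + v d.snd) ^ 2 = Q := by
        rw [Finset.sum_image (fun a _ b _ h =>
          SimpleGraph.Dart.symm_involutive.injective h)]
        refine Finset.sum_congr rfl fun d _ => ?_
        simp [SimpleGraph.Dart.symm, add_comm]
      calc 2 * Q = Q + Q := by ring
        _ = ∑ d ∈ Fd ∪ Fd.image SimpleGraph.Dart.symm, (v d.fst + v d.snd) ^ 2 := by
            rw [Finset.sum_union hdij, hQ']
        _ ≤ TD := Finset.sum_le_sum_of_subset_of_nonneg (Finset.subset_univ _)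
            (fun d _ _ => sq_nonneg _)
    have hbig : (X + Y) ^ 2 ≤ (2 * (w.length : ℝ) + 1) * (Q / 2 + Y ^ 2) :=
      cs_combine X Y Q (w.length : ℝ) hX0 (abs_nonneg _) hQ0 (Nat.cast_nonneg _) hCS
    have hvx : (v x) ^ 2 ≤ (X + Y) ^ 2 := by
      rw [← sq_abs (v x)]
      exact pow_le_pow_left₀ (abs_nonneg _) htele 2
    have hfac : (2 * (w.length : ℝ) + 1) * (Q / 2 + Y ^ 2)
        ≤ (2 * (T.diam : ℝ) + 1) * (TD / 4 + (v T.root) ^ 2) := by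
      apply mul_le_mul
      · have h := hklediam
        have : (w.length : ℝ) ≤ (T.diam : ℝ) := by exact_mod_cast h
        linarith
      · have hYsq : Y ^ 2 = (v T.root) ^ 2 := by rw [hY, sq_abs]
        linarith
      · positivity
      · positivity
    calc (v x) ^ 2 ≤ (2 * (T.diam : ℝ) + 1) * (TD / 4 + (v T.root) ^ 2) :=
          le_trans hvx (le_trans hbig hfac)
      _ = (2 * (T.diam : ℝ) + 1) * (TD + 4 * (v T.root) ^ 2) / 4 := by ring
  -- sum of degrees
  have hsumdeg : ∑ x, (T.deg x : ℝ) ≤ 2 * (Fintype.card S : ℝ) := by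
    have hnat : ∑ x, T.deg x = 2 * (Fintype.card S - 1) + 1 := by
      simp only [TreeWithLoop.deg]
      rw [Finset.sum_add_distrib]
      have h1 : ∑ x, T.g.degree x = 2 * (Fintype.card S - 1) := by
        have hh := T.isTree.card_edgeFinset
        rw [SimpleGraph.sum_degrees_eq_twice_card_edges]
        omega
      have h2 : ∑ x : S, (if x = T.root then 1 else 0) = 1 := by
        rw [Finset.sum_ite_eq' Finset.univ T.root (fun _ => 1)]
        simp
      rw [h1, h2]
    have hcast : (∑ x, (T.deg x : ℝ)) = ((∑ x, T.deg x : ℕ) : ℝ) := by push_cast; ring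
    rw [hcast, hnat]
    have hcard := T.card_ge
    push_cast [Nat.cast_sub (by omega : 1 ≤ Fintype.card S)]
    have h2 : (2 : ℝ) ≤ Fintype.card S := by exact_mod_cast hcard
    linarith
  -- Dm is positive
  have hDmpos : 0 < Dm := by
    rw [hDm]
    obtain ⟨x1, hx1⟩ := Function.ne_iff.mp hv
    apply Finset.sum_pos' (fun x _ => by positivity)
    refine ⟨x1, Finset.mem_univ x1, ?_⟩
    have h1 := hdegpos x1
    have h2 : 0 < (v x1) ^ 2 := pow_two_pos_of_ne_zero hx1
    exact mul_pos h1 h2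
  -- pick the max
  obtain ⟨x0, _, hx0⟩ := Finset.exists_max_image Finset.univ (fun x => (v x) ^ 2)
    ⟨T.root, Finset.mem_univ T.root⟩
  have hDmle : Dm ≤ (2 * (Fintype.card S : ℝ)) * (v x0) ^ 2 := by
    calc Dm ≤ ∑ x, (T.deg x : ℝ) * (v x0) ^ 2 := by
          refine Finset.sum_le_sum fun x _ => ?_
          exact mul_le_mul_of_nonneg_left (hx0 x (Finset.mem_univ x)) (le_of_lt (hdegpos x))
      _ = (∑ x, (T.deg x : ℝ)) * (v x0) ^ 2 := by rw [← Finset.sum_mul]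
      _ ≤ (2 * (Fintype.card S : ℝ)) * (v x0) ^ 2 :=
          mul_le_mul_of_nonneg_right hsumdeg (sq_nonneg _)
  -- final chain
  have hchain : Dm ≤ (Fintype.card S : ℝ) * ((2 * (T.diam : ℝ) + 1) * ((1 + lam) * Dm)) := by
    calc Dm ≤ (2 * (Fintype.card S : ℝ)) * (v x0) ^ 2 := hDmle
      _ ≤ (2 * (Fintype.card S : ℝ)) *
          ((2 * (T.diam : ℝ) + 1) * (TD + 4 * (v T.root) ^ 2) / 4) := by
          have hcard : (0 : ℝ) ≤ 2 * (Fintype.card S : ℝ) := by positivity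
          exact mul_le_mul_of_nonneg_left (hvertex x0) hcard
      _ = (Fintype.card S : ℝ) * ((2 * (T.diam : ℝ) + 1) * ((1 + lam) * Dm)) := by
          rw [hMD]; ring
  have hC : (0 : ℝ) < (2 * (T.diam : ℝ) + 1) * (Fintype.card S : ℝ) := by
    have hcard : (0 : ℝ) < (Fintype.card S : ℝ) := by
      have := T.card_ge
      have : (2 : ℝ) ≤ (Fintype.card S : ℝ) := by exact_mod_cast this
      linarith
    positivity
  have h1 : 1 ≤ ((2 * (T.diam : ℝ) + 1) * (Fintype.card S : ℝ)) * (1 + lam) := by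
    have hkey : Dm * 1 ≤ Dm * (((2 * (T.diam : ℝ) + 1) * (Fintype.card S : ℝ)) * (1 + lam)) := by
      calc Dm * 1 = Dm := mul_one Dm
        _ ≤ (Fintype.card S : ℝ) * ((2 * (T.diam : ℝ) + 1) * ((1 + lam) * Dm)) := hchain
        _ = Dm * (((2 * (T.diam : ℝ) + 1) * (Fintype.card S : ℝ)) * (1 + lam)) := by ring
    exact le_of_mul_le_mul_left (by linarith [hkey]) hDmpos
  have h2 : 1 / ((2 * (T.diam : ℝ) + 1) * (Fintype.card S : ℝ)) ≤ 1 + lam := by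
    rw [div_le_iff₀ hC]
    linarith
  linarith
end

section
/- Let P be the transition matrix of a reversible, irreducible and aperiodic Markov chain on a finite state space S with stationary distribution π (so π(y) > 0 for all y). Fix a state x0 and let η be an ℕ-valued random variable (an optimal strong stationary time for the chain started at x0) satisfying P(η > t) = s_{x0}(t) for every t ∈ ℕ. Then for every ℓ ∈ ℕ, P(η > ℓ·t_mix) ≤ 4·2^{−⌊ℓ/2⌋}. -/
/-!
For a reversible chain `P^{2t}(x,y)/π(y) = ∑_z P^t(x,z) P^t(y,z)/π(z)`, and Cauchy–Schwarz bounds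
this from below by `(1 - d̄(t))² ≥ 1 - 2 d̄(t)`, where `d̄(t)` is the largest total-variation
distance between two rows of `Pᵗ`; hence `s(2t) ≤ 2 d̄(t)`. Dobrushin's contraction makes `d̄`
submultiplicative, and `d̄ ≤ 2d`, so with `k = ⌊ℓ/2⌋` we get
`P(η > ℓ t_mix) ≤ s(2k t_mix) ≤ 2 d̄(t_mix)^k ≤ 2 · 2^{-k}`. Aperiodicity makes a power of `P`
entrywise positive, which forces `d̄(t) → 0` and so makes `t_mix` well defined.
-/

open MeasureTheory Finset Matrix

section TotalVariation

variable {S : Type*} [Fintype S]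

noncomputable def tvDist (a b : S → ℝ) : ℝ := 1 / 2 * ∑ y, |a y - b y|

theorem tvDist_nonneg (a b : S → ℝ) : 0 ≤ tvDist a b := by
  unfold tvDist; positivity

theorem tvDist_le_one_sub_card_mul {a b : S → ℝ} {ε : ℝ} (ha : ∀ y, ε ≤ a y) (hb : ∀ y, ε ≤ b y)
    (ha₁ : ∑ y, a y = 1) (hb₁ : ∑ y, b y = 1) :
    tvDist a b ≤ 1 - Fintype.card S * ε := by
  have h : ∀ y, |a y - b y| ≤ a y + b y - 2 * ε := fun y =>
    abs_sub_le_iff.2 ⟨by linarith [hb y], by linarith [ha y]⟩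
  calc tvDist a b ≤ 1 / 2 * ∑ y, (a y + b y - 2 * ε) := by
        unfold tvDist; gcongr with y; exact h y
    _ = 1 - Fintype.card S * ε := by
        rw [sum_sub_distrib, sum_add_distrib, ha₁, hb₁, sum_const, card_univ, nsmul_eq_mul]; ring

theorem tvDist_le_one {a b : S → ℝ} (ha : ∀ y, 0 ≤ a y) (hb : ∀ y, 0 ≤ b y)
    (ha₁ : ∑ y, a y = 1) (hb₁ : ∑ y, b y = 1) : tvDist a b ≤ 1 := by
  simpa using tvDist_le_one_sub_card_mul ha hb ha₁ hb₁

theorem tvDist_triangle_right (a b c : S → ℝ) : tvDist a b ≤ tvDist a c + tvDist b c := by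
  unfold tvDist
  rw [← mul_add, ← sum_add_distrib]
  gcongr with y
  exact abs_sub_le_iff.2 ⟨by linarith [le_abs_self (a y - c y), neg_abs_le (b y - c y)],
    by linarith [neg_abs_le (a y - c y), le_abs_self (b y - c y)]⟩

theorem sum_mul_le_of_sum_eq_zero {f h : S → ℝ} {c : ℝ} (hf : ∑ z, f z = 0)
    (hh : ∀ z z', h z - h z' ≤ c) : ∑ z, f z * h z ≤ (∑ z, |f z|) * c / 2 := by
  cases isEmpty_or_nonempty S
  · simp
  obtain ⟨zmax, hmax⟩ := Finite.exists_max h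
  obtain ⟨zmin, hmin⟩ := Finite.exists_min h
  -- since `∑ f = 0`, `h` may be recentred at the midpoint of its range
  obtain ⟨m, hm⟩ : ∃ m, ∀ z, |h z - m| ≤ c / 2 := ⟨(h zmax + h zmin) / 2, fun z =>
    abs_sub_le_iff.2 ⟨by linarith [hmax z, hh zmax zmin], by linarith [hmin z, hh zmax zmin]⟩⟩
  calc ∑ z, f z * h z = ∑ z, f z * (h z - m) := by
        simp only [mul_sub, sum_sub_distrib, ← sum_mul, hf, zero_mul, sub_zero]
    _ ≤ ∑ z, |f z| * (c / 2) := sum_le_sum fun z _ => (le_abs_self _).trans <| by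
        rw [abs_mul]; exact mul_le_mul_of_nonneg_left (hm z) (abs_nonneg _)
    _ = (∑ z, |f z|) * c / 2 := by rw [← sum_mul]; ring

theorem tvDist_vecMul_le {T : Type*} [Fintype T] {a b : S → ℝ} {A : Matrix S T ℝ} {c : ℝ}
    (hab : ∑ z, a z = ∑ z, b z) (hA : ∀ z z', tvDist (A z) (A z') ≤ c) :
    tvDist (a ᵥ* A) (b ᵥ* A) ≤ tvDist a b * c := by
  -- pair `u = (a - b) ᵥ* A` with its sign vector `g` and move `A` over to `g`
  set u := (a - b) ᵥ* A
  set g : T → ℝ := fun y => (SignType.sign (u y) : ℝ)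
  have hsign : ∀ (x : ℝ) (s : SignType), x * s ≤ |x| := by
    intro x s; cases s <;> simp [le_abs_self, neg_le_abs]
  have hosc : ∀ z z', (A *ᵥ g) z - (A *ᵥ g) z' ≤ 2 * c := by
    intro z z'
    calc (A *ᵥ g) z - (A *ᵥ g) z' = ∑ y, (A z y - A z' y) * g y := by
          simp only [mulVec, dotProduct, ← sum_sub_distrib, sub_mul]
      _ ≤ ∑ y, |A z y - A z' y| := sum_le_sum fun y _ => hsign _ _
      _ ≤ 2 * c := by have := hA z z'; unfold tvDist at this; linarith
  have hsum : ∑ z, (a - b) z = 0 := by simp [sum_sub_distrib, hab]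
  have key : ∑ y, |u y| ≤ (∑ z, |(a - b) z|) * (2 * c) / 2 := by
    calc ∑ y, |u y| = u ⬝ᵥ g := by simp [dotProduct, g]
      _ = (a - b) ⬝ᵥ (A *ᵥ g) := (dotProduct_mulVec _ _ _).symm
      _ ≤ _ := sum_mul_le_of_sum_eq_zero hsum hosc
  have hu : ∀ y, (a ᵥ* A) y - (b ᵥ* A) y = u y := by simp [u, sub_vecMul]
  unfold tvDist
  simp only [hu, Pi.sub_apply] at key ⊢
  linarith

theorem one_sub_two_mul_tvDist_le_sum_mul_div {a b π : S → ℝ} (ha : ∀ y, 0 ≤ a y)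
    (hb : ∀ y, 0 ≤ b y) (ha₁ : ∑ y, a y = 1) (hb₁ : ∑ y, b y = 1) (hπ : ∀ y, 0 < π y)
    (hπ₁ : ∑ y, π y = 1) : 1 - 2 * tvDist a b ≤ ∑ y, a y * b y / π y := by
  set m : S → ℝ := fun y => min (a y) (b y)
  have hm_sum : ∑ y, m y = 1 - tvDist a b := by
    have h : ∀ y, m y = (a y + b y - |a y - b y|) / 2 := fun y => by
      rw [← max_sub_min_eq_abs', ← min_add_max (a y) (b y)]; ring
    simp only [h, ← sum_div, sum_sub_distrib, sum_add_distrib, ha₁, hb₁, tvDist]; ring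
  -- Cauchy–Schwarz against `π`, using `min (a y) (b y) ^ 2 ≤ a y * b y`
  have hcs : (∑ y, m y) ^ 2 ≤ ∑ y, a y * b y / π y := by
    calc (∑ y, m y) ^ 2 = (∑ y, m y) ^ 2 / ∑ y, π y := by rw [hπ₁, div_one]
      _ ≤ ∑ y, m y ^ 2 / π y := sq_sum_div_le_sum_sq_div _ _ fun y _ => hπ y
      _ ≤ ∑ y, a y * b y / π y := by
        refine sum_le_sum fun y _ => div_le_div_of_nonneg_right ?_ (hπ y).le
        rw [sq]
        exact mul_le_mul (min_le_left _ _) (min_le_right _ _) (le_min (ha y) (hb y)) (ha y)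
  nlinarith [sq_nonneg (∑ y, m y - 1)]

end TotalVariation

section MarkovChain

variable {S : Type*} [Fintype S] [DecidableEq S] {P : Matrix S S ℝ} {π : S → ℝ}

def IsReversible (P : Matrix S S ℝ) (π : S → ℝ) : Prop :=
  ∀ x y, π x * P x y = π y * P y x

theorem IsReversible.pow (hrev : IsReversible P π) (n : ℕ) : IsReversible (P ^ n) π := by
  induction n with
  | zero =>
    intro x y
    rcases eq_or_ne x y with rfl | hxy
    · rfl
    · simp [one_apply_ne hxy, one_apply_ne hxy.symm]
  | succ n ih =>
    intro x y
    conv_lhs => rw [pow_succ, mul_apply, mul_sum]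
    conv_rhs => rw [pow_succ', mul_apply, mul_sum]
    refine sum_congr rfl fun z _ => ?_
    calc π x * ((P ^ n) x z * P z y) = π x * (P ^ n) x z * P z y := by ring
      _ = π z * P z y * (P ^ n) z x := by rw [ih]; ring
      _ = π y * (P y z * (P ^ n) z x) := by rw [hrev]; ring

theorem IsReversible.vecMul_eq (hrev : IsReversible P π) (hP : P ∈ rowStochastic ℝ S) :
    π ᵥ* P = π := by
  ext y
  simp only [vecMul, dotProduct, hrev _ y, ← mul_sum, sum_row_of_mem_rowStochastic hP, mul_one]

theorem vecMul_pow_eq (hπ : π ᵥ* P = π) (n : ℕ) : π ᵥ* P ^ n = π := by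
  induction n with
  | zero => simp
  | succ n ih => rw [pow_succ, ← vecMul_vecMul, ih, hπ]

theorem IsReversible.pow_add_self_apply_div (hrev : IsReversible P π) (hπ : ∀ y, 0 < π y)
    (s : ℕ) (x y : S) :
    (P ^ (s + s)) x y / π y = ∑ z, (P ^ s) x z * (P ^ s) y z / π z := by
  rw [pow_add, mul_apply, sum_div]
  refine sum_congr rfl fun z _ => ?_
  have := hrev.pow s z y
  field_simp [(hπ y).ne', (hπ z).ne']
  linear_combination (P ^ s) x z * this

-- `tvDistToStationary P π t` and `maxRowTVDist P t` are `d(t)` and `d̄(t)` of Levin–Peres–Wilmer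
noncomputable def tvDistToStationary (P : Matrix S S ℝ) (π : S → ℝ) (t : ℕ) : ℝ :=
  ⨆ x, tvDist ((P ^ t) x) π

noncomputable def maxRowTVDist (P : Matrix S S ℝ) (t : ℕ) : ℝ :=
  ⨆ p : S × S, tvDist ((P ^ t) p.1) ((P ^ t) p.2)

theorem tvDist_le_tvDistToStationary (t : ℕ) (x : S) :
    tvDist ((P ^ t) x) π ≤ tvDistToStationary P π t :=
  le_ciSup (f := fun x => tvDist ((P ^ t) x) π) (Finite.bddAbove_range _) x

theorem tvDist_le_maxRowTVDist (t : ℕ) (x x' : S) :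
    tvDist ((P ^ t) x) ((P ^ t) x') ≤ maxRowTVDist P t :=
  le_ciSup (Finite.bddAbove_range (fun p : S × S => tvDist ((P ^ t) p.1) ((P ^ t) p.2))) (x, x')

theorem tvDistToStationary_nonneg (t : ℕ) : 0 ≤ tvDistToStationary P π t :=
  Real.iSup_nonneg fun _ => tvDist_nonneg _ _

theorem maxRowTVDist_nonneg (t : ℕ) : 0 ≤ maxRowTVDist P t :=
  Real.iSup_nonneg fun _ => tvDist_nonneg _ _

theorem maxRowTVDist_le_one (hP : P ∈ rowStochastic ℝ S) (t : ℕ) : maxRowTVDist P t ≤ 1 := by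
  have hPt := pow_mem hP t
  exact Real.iSup_le (fun p => tvDist_le_one (fun _ => nonneg_of_mem_rowStochastic hPt)
    (fun _ => nonneg_of_mem_rowStochastic hPt) (sum_row_of_mem_rowStochastic hPt _)
    (sum_row_of_mem_rowStochastic hPt _)) zero_le_one

theorem maxRowTVDist_add_le (hP : P ∈ rowStochastic ℝ S) (s t : ℕ) :
    maxRowTVDist P (s + t) ≤ maxRowTVDist P s * maxRowTVDist P t := by
  refine Real.iSup_le (fun ⟨x, x'⟩ => ?_)
    (mul_nonneg (maxRowTVDist_nonneg s) (maxRowTVDist_nonneg t))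
  have hPs := pow_mem hP s
  calc tvDist ((P ^ (s + t)) x) ((P ^ (s + t)) x')
      = tvDist ((P ^ s) x ᵥ* P ^ t) ((P ^ s) x' ᵥ* P ^ t) := by rw [pow_add]; rfl
    _ ≤ tvDist ((P ^ s) x) ((P ^ s) x') * maxRowTVDist P t := by
        refine tvDist_vecMul_le ?_ (tvDist_le_maxRowTVDist t)
        rw [sum_row_of_mem_rowStochastic hPs, sum_row_of_mem_rowStochastic hPs]
    _ ≤ maxRowTVDist P s * maxRowTVDist P t :=
        mul_le_mul_of_nonneg_right (tvDist_le_maxRowTVDist s x x') (maxRowTVDist_nonneg t)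

theorem maxRowTVDist_mul_le_pow (hP : P ∈ rowStochastic ℝ S) (t k : ℕ) :
    maxRowTVDist P (k * t) ≤ maxRowTVDist P t ^ k := by
  induction k with
  | zero => simpa using maxRowTVDist_le_one hP 0
  | succ k ih =>
    calc maxRowTVDist P ((k + 1) * t) ≤ maxRowTVDist P (k * t) * maxRowTVDist P t := by
          rw [add_one_mul]; exact maxRowTVDist_add_le hP _ _
      _ ≤ maxRowTVDist P t ^ (k + 1) := by
          rw [pow_succ]; exact mul_le_mul_of_nonneg_right ih (maxRowTVDist_nonneg t)

theorem maxRowTVDist_le_two_mul (t : ℕ) : maxRowTVDist P t ≤ 2 * tvDistToStationary P π t :=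
  Real.iSup_le (fun ⟨x, x'⟩ => (tvDist_triangle_right _ _ π).trans (by
    linarith [tvDist_le_tvDistToStationary (P := P) (π := π) t x,
      tvDist_le_tvDistToStationary (P := P) (π := π) t x']))
    (by linarith [tvDistToStationary_nonneg (P := P) (π := π) t])

theorem tvDistToStationary_le_maxRowTVDist (hπ : π ᵥ* P = π)
    (hπ₀ : ∀ y, 0 ≤ π y) (hπ₁ : ∑ y, π y = 1) (t : ℕ) :
    tvDistToStationary P π t ≤ maxRowTVDist P t := by
  refine Real.iSup_le (fun x => ?_) (maxRowTVDist_nonneg t)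
  have hδ₁ : ∑ y, Pi.single x (1 : ℝ) y = 1 := by simp
  calc tvDist ((P ^ t) x) π = tvDist (Pi.single x 1 ᵥ* P ^ t) (π ᵥ* P ^ t) := by
        rw [single_one_vecMul, vecMul_pow_eq hπ]; rfl
    _ ≤ tvDist (Pi.single x 1) π * maxRowTVDist P t :=
        tvDist_vecMul_le (hδ₁.trans hπ₁.symm) (tvDist_le_maxRowTVDist t)
    _ ≤ maxRowTVDist P t := by
        refine mul_le_of_le_one_left (maxRowTVDist_nonneg t) (tvDist_le_one ?_ hπ₀ hδ₁ hπ₁)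
        intro y; rcases eq_or_ne y x with rfl | h <;> simp [*]

theorem maxRowTVDist_lt_one [Nonempty S] (hP : P ∈ rowStochastic ℝ S) {N : ℕ}
    (hN : ∀ x y, 0 < (P ^ N) x y) : maxRowTVDist P N < 1 := by
  obtain ⟨⟨x₀, y₀⟩, hmin⟩ := Finite.exists_min fun p : S × S => (P ^ N) p.1 p.2
  have hPN := pow_mem hP N
  have hle : ∀ x y, (P ^ N) x₀ y₀ ≤ (P ^ N) x y := fun x y => hmin (x, y)
  calc maxRowTVDist P N ≤ 1 - Fintype.card S * (P ^ N) x₀ y₀ :=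
        ciSup_le fun p => tvDist_le_one_sub_card_mul (hle p.1) (hle p.2)
          (sum_row_of_mem_rowStochastic hPN _) (sum_row_of_mem_rowStochastic hPN _)
    _ < 1 := sub_lt_self 1 (mul_pos (by exact_mod_cast Fintype.card_pos) (hN x₀ y₀))

theorem exists_tvDistToStationary_le [Nonempty S] (hP : P ∈ rowStochastic ℝ S)
    (hπ : π ᵥ* P = π) (hπ₀ : ∀ y, 0 ≤ π y) (hπ₁ : ∑ y, π y = 1) {N : ℕ}
    (hN : ∀ x y, 0 < (P ^ N) x y) {δ : ℝ} (hδ : 0 < δ) :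
    ∃ t, tvDistToStationary P π t ≤ δ := by
  obtain ⟨k, hk⟩ := exists_pow_lt_of_lt_one hδ (maxRowTVDist_lt_one hP hN)
  exact ⟨k * N, (tvDistToStationary_le_maxRowTVDist hπ hπ₀ hπ₁ _).trans
    ((maxRowTVDist_mul_le_pow hP N k).trans hk.le)⟩

theorem one_sub_pow_two_mul_apply_div_le (hP : P ∈ rowStochastic ℝ S) (hrev : IsReversible P π)
    (hπ : ∀ y, 0 < π y) (hπ₁ : ∑ y, π y = 1) (s : ℕ) (x y : S) :
    1 - (P ^ (2 * s)) x y / π y ≤ 2 * maxRowTVDist P s := by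
  have hPs := pow_mem hP s
  have := one_sub_two_mul_tvDist_le_sum_mul_div (fun _ => nonneg_of_mem_rowStochastic hPs)
    (fun _ => nonneg_of_mem_rowStochastic hPs) (sum_row_of_mem_rowStochastic hPs x)
    (sum_row_of_mem_rowStochastic hPs y) hπ hπ₁
  rw [two_mul, hrev.pow_add_self_apply_div hπ]
  linarith [tvDist_le_maxRowTVDist (P := P) s x y]

end MarkovChain

theorem optimal_sst_tail_bound_general
    {S : Type*} [Fintype S] [DecidableEq S] [Nonempty S]
    {Ω : Type*} [MeasurableSpace Ω] (μ : Measure Ω) [IsProbabilityMeasure μ]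
    (P : Matrix S S ℝ) (π : S → ℝ)
    (hPnonneg : ∀ x y, 0 ≤ P x y) (hProw : ∀ x, ∑ y : S, P x y = 1)
    (hπpos : ∀ y, 0 < π y) (hπsum : ∑ y : S, π y = 1)
    (hrev : ∀ x y, π x * P x y = π y * P y x)
    (haper : ∃ N : ℕ, ∀ n ≥ N, ∀ x y, 0 < (P ^ n) x y)
    (x0 : S) (η : Ω → ℕ)
    (sep : ℕ → ℝ)
    (hsep : ∀ t : ℕ, sep t = ⨆ y : S, (1 - (P ^ t) x0 y / π y))
    (hη : ∀ t : ℕ, (μ {ω | t < η ω}).toReal = sep t)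
    (d : ℕ → ℝ)
    (hd : ∀ t : ℕ, d t = ⨆ x : S, (1 / 2) * ∑ y : S, |(P ^ t) x y - π y|)
    (tmix : ℕ) (htmix : tmix = sInf {t : ℕ | d t ≤ 1 / 4})
    (ℓ : ℕ) :
    (μ {ω | ℓ * tmix < η ω}).toReal ≤ 4 * (2 : ℝ) ^ (-((ℓ : ℤ) / 2)) := by
  have hP : P ∈ rowStochastic ℝ S := mem_rowStochastic_iff_sum.2 ⟨hPnonneg, hProw⟩
  have hπ : π ᵥ* P = π := IsReversible.vecMul_eq hrev hP
  have hπ₀ : ∀ y, 0 ≤ π y := fun y => (hπpos y).le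
  obtain rfl : d = tvDistToStationary P π := funext hd
  obtain ⟨N, hN⟩ := haper
  have hmix : tvDistToStationary P π tmix ≤ 1 / 4 := htmix ▸ Nat.sInf_mem
    (exists_tvDistToStationary_le hP hπ hπ₀ hπsum (hN N le_rfl) (by norm_num))
  set k := ℓ / 2
  have hk : (ℓ : ℤ) / 2 = k := by omega
  calc (μ {ω | ℓ * tmix < η ω}).toReal ≤ (μ {ω | 2 * (k * tmix) < η ω}).toReal := by
        refine ENNReal.toReal_mono (measure_ne_top μ _) (measure_mono fun ω hω => ?_)
        have : 2 * k * tmix ≤ ℓ * tmix := Nat.mul_le_mul_right _ (Nat.mul_div_le ℓ 2)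
        show 2 * (k * tmix) < η ω
        rw [← mul_assoc]
        exact this.trans_lt hω
    _ = sep (2 * (k * tmix)) := hη _
    _ ≤ 2 * maxRowTVDist P (k * tmix) := by
        rw [hsep]
        exact ciSup_le (one_sub_pow_two_mul_apply_div_le hP hrev hπpos hπsum _ x0)
    _ ≤ 2 * (2 * tvDistToStationary P π tmix) ^ k := by
        gcongr
        exact (maxRowTVDist_mul_le_pow hP tmix k).trans
          (pow_le_pow_left₀ (maxRowTVDist_nonneg _) (maxRowTVDist_le_two_mul tmix) k)
    _ ≤ 4 * (2 : ℝ) ^ (-((ℓ : ℤ) / 2)) := by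
        rw [hk, _root_.zpow_neg, zpow_natCast, ← one_div, ← _root_.one_div_pow]
        have h₀ : 0 ≤ tvDistToStationary P π tmix := tvDistToStationary_nonneg tmix
        gcongr <;> linarith

/-- **Tail bound for an optimal strong stationary time.**
Let `P` be the transition matrix of a reversible, irreducible and aperiodic Markov chain on a
finite state space `S` with stationary distribution `π > 0`.  Fix a state `x0` and let `η` be an
`ℕ`-valued random variable with `P(η > t) = s_{x0}(t)` for all `t`, where
`s_x(t) = max_y (1 - Pᵗ(x,y)/π(y))` is the separation distance.  Then for every `ℓ ∈ ℕ`,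
`P(η > ℓ·t_mix) ≤ 4·2^{-⌊ℓ/2⌋}`, where `t_mix = min{t : d(t) ≤ 1/4}` and
`d(t) = max_x (1/2)·Σ_y |Pᵗ(x,y) - π(y)|`. -/
theorem optimal_sst_tail_bound
    {S : Type*} [Fintype S] [DecidableEq S] [Nonempty S]
    {Ω : Type*} [MeasurableSpace Ω] (μ : Measure Ω) [IsProbabilityMeasure μ]
    (P : Matrix S S ℝ) (π : S → ℝ)
    (hPnonneg : ∀ x y, 0 ≤ P x y) (hProw : ∀ x, ∑ y : S, P x y = 1)
    (hπpos : ∀ y, 0 < π y) (hπsum : ∑ y : S, π y = 1)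
    (hstat : ∀ y, ∑ x : S, π x * P x y = π y)
    (hrev : ∀ x y, π x * P x y = π y * P y x)
    (hirr : ∀ x y, ∃ n : ℕ, 0 < (P ^ n) x y)
    (haper : ∃ N : ℕ, ∀ n ≥ N, ∀ x y, 0 < (P ^ n) x y)
    (x0 : S) (η : Ω → ℕ)
    (sep : ℕ → ℝ)
    (hsep : ∀ t : ℕ, sep t = ⨆ y : S, (1 - (P ^ t) x0 y / π y))
    (hη : ∀ t : ℕ, (μ {ω | t < η ω}).toReal = sep t)
    (d : ℕ → ℝ)
    (hd : ∀ t : ℕ, d t = ⨆ x : S, (1 / 2) * ∑ y : S, |(P ^ t) x y - π y|)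
    (tmix : ℕ) (htmix : tmix = sInf {t : ℕ | d t ≤ 1 / 4})
    (ℓ : ℕ) :
    (μ {ω | ℓ * tmix < η ω}).toReal ≤ 4 * (2 : ℝ) ^ (-((ℓ : ℤ) / 2)) :=
  optimal_sst_tail_bound_general μ P π hPnonneg hProw hπpos hπsum hrev haper x0 η sep hsep hη d hd
    tmix htmix ℓ
end

section
/- Let γ ∈ (2/3, 1) and let 0 < ε < γ/(1−γ) − 2. Let (Z_k)_{k≥1} be independent random variables with P(Z_k = 1) = k^{−γ} = 1 − P(Z_k = 0), and define the growth times τ_0 = 0 and τ_k = inf{n > τ_{k−1} : Z_n = 1} for k ≥ 1, with Δτ_k = τ_{k+1} − τ_k. Then there exists δ′ > 0 (depending only on γ and ε) such that for all sufficiently large n, P(Δτ_n ≤ n^{1+ε}) ≤ n^{−(1+δ′)}. -/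
/-!
Outside a null set there are infinitely many successes (second Borel–Cantelli lemma, since
`∑ k ^ (-γ) = ∞`), and then `τ_n` is the time of the `n`-th success. Choose `β` with
`β γ = 2 + ε + 2δ` and `β (1 - γ) < 1`, and put `T = ⌊n ^ β⌋`, `L = ⌊n ^ (1 + ε)⌋`.
If `Δτ_n ≤ L`, then either
* `τ_n ≤ T`: there are at least `n` successes among the first `T` trials, whose expected number
  is `O(T ^ (1 - γ)) = o(n)`, so a Chernoff bound makes this exponentially unlikely; or
* the `n`-th success occurs at some `t > T` and is followed by another one within `L` steps.
  The first event depends on `Z_1, …, Z_t` only, so by independence and disjointness in `t` its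
  probability is at most `L T ^ (-γ) ≈ n ^ (-(1 + 2δ))`.
-/

open MeasureTheory ProbabilityTheory Finset

/-- The growth times of the tree builder random walk: `τ_0 = 0` and
`τ_k = inf{n > τ_{k-1} : Z_n = 1}` for `k ≥ 1` (with the convention `sInf ∅ = 0`). -/
noncomputable def growthTime {Ω : Type*} (Z : ℕ → Ω → ℕ) : ℕ → Ω → ℕ
  | 0, _ => 0
  | k + 1, ω => sInf {n : ℕ | growthTime Z k ω < n ∧ Z n ω = 1}

open Filter Function
open scoped ENNReal

lemma tsum_ofReal_natCast_rpow_neg_eq_top {γ : ℝ} (hγ : γ ≤ 1) :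
    ∑' k : ℕ, ENNReal.ofReal ((k : ℝ) ^ (-γ)) = ∞ := by
  by_contra h
  have := ENNReal.summable_toReal h
  simp_rw [ENNReal.toReal_ofReal (Real.rpow_nonneg (Nat.cast_nonneg _) _)] at this
  exact absurd (Real.summable_nat_rpow.1 this) (by linarith)

lemma sum_Icc_rpow_neg_le {γ : ℝ} (hγ₀ : 0 ≤ γ) (hγ₁ : γ < 1) (T : ℕ) :
    ∑ k ∈ Icc 1 T, (k : ℝ) ^ (-γ) ≤ (T : ℝ) ^ (1 - γ) / (1 - γ) := by
  rcases T.eq_zero_or_pos with rfl | hT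
  · simp [Real.zero_rpow (by linarith : 1 - γ ≠ 0)]
  have hanti : AntitoneOn (fun x : ℝ => x ^ (-γ)) (Set.Icc (1 : ℕ) T) := fun x hx y _ hxy =>
    Real.rpow_le_rpow_of_nonpos (by linarith [hx.1, (Nat.cast_one : ((1 : ℕ) : ℝ) = 1)]) hxy
      (by linarith)
  have hsum : ∑ k ∈ Icc 1 T, (k : ℝ) ^ (-γ) =
      1 + ∑ i ∈ Ico 1 T, ((i + 1 : ℕ) : ℝ) ^ (-γ) := by
    rw [← Ico_add_one_right_eq_Icc, sum_eq_sum_Ico_succ_bot (by omega), Nat.cast_one,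
      Real.one_rpow, ← sum_Ico_add' (c := 1)]
  have hint :
      ∫ x in (1 : ℕ)..(T : ℕ), (x : ℝ) ^ (-γ) = ((T : ℝ) ^ (1 - γ) - 1) / (1 - γ) := by
    rw [integral_rpow (.inl (by linarith))]
    norm_num [sub_eq_add_neg, add_comm]
  have h := hanti.sum_le_integral_Ico (a := 1) hT
  rw [hint] at h
  have h1γ : 1 ≤ 1 / (1 - γ) := by rw [le_div_iff₀ (by linarith)]; linarith
  calc ∑ k ∈ Icc 1 T, (k : ℝ) ^ (-γ) ≤ 1 + ((T : ℝ) ^ (1 - γ) - 1) / (1 - γ) :=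
        hsum ▸ by linarith
    _ ≤ (T : ℝ) ^ (1 - γ) / (1 - γ) := by rw [sub_div]; linarith

lemma eventually_exp_neg_add_mul_rpow_le_rpow_neg {a : ℝ} (ha : a < 1) (C p : ℝ) :
    ∀ᶠ n : ℕ in atTop, Real.exp (-n + C * (n : ℝ) ^ a) ≤ (n : ℝ) ^ (-p) := by
  have hsmall : ∀ᶠ x : ℝ in atTop, C * x ^ (-(1 - a)) ≤ 1 / 2 := by
    have := (tendsto_rpow_neg_atTop (by linarith : 0 < 1 - a)).const_mul C
    rw [mul_zero] at this
    exact this.eventually (eventually_le_nhds (by norm_num))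
  have hexp : ∀ᶠ x : ℝ in atTop, x ^ p * Real.exp (-(1 / 2) * x) ≤ 1 :=
    (tendsto_rpow_mul_exp_neg_mul_atTop_nhds_zero p (1 / 2) (by norm_num)).eventually
      (eventually_le_nhds (by norm_num))
  refine (tendsto_natCast_atTop_atTop (R := ℝ)).eventually
    (p := fun x => Real.exp (-x + C * x ^ a) ≤ x ^ (-p)) ?_
  filter_upwards [hsmall, hexp, eventually_gt_atTop 0] with x hsmall hexp hx
  have hxa : C * x ^ a ≤ x / 2 := by
    have : x ^ a = x ^ (-(1 - a)) * x := by
      rw [← Real.rpow_add_one hx.ne']; ring_nf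
    rw [this, ← mul_assoc]
    nlinarith
  calc Real.exp (-x + C * x ^ a) ≤ Real.exp (-(1 / 2) * x) := Real.exp_le_exp.2 (by linarith)
    _ ≤ x ^ (-p) := by
      rw [Real.rpow_neg hx.le, inv_eq_one_div, le_div_iff₀ (Real.rpow_pos_of_pos hx p), mul_comm]
      exact hexp

lemma two_mul_rpow_neg_add_le {x δ : ℝ} (hx : 0 < x) (h : 2 ≤ x ^ δ) (p : ℝ) :
    2 * x ^ (-(p + δ)) ≤ x ^ (-p) := by
  rw [neg_add, Real.rpow_add hx, Real.rpow_neg hx.le δ]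
  have := Real.rpow_pos_of_pos hx (-p)
  calc 2 * (x ^ (-p) * (x ^ δ)⁻¹) = x ^ (-p) * (2 / x ^ δ) := by ring
    _ ≤ x ^ (-p) * 1 := by gcongr; rwa [div_le_one (by linarith)]
    _ = x ^ (-p) := mul_one _

lemma exists_growth_exponents {γ ε : ℝ} (hγ₀ : 0 < γ) (hγ₁ : γ < 1)
    (hε : ε < γ / (1 - γ) - 2) :
    ∃ β δ : ℝ, 0 < δ ∧ β * (1 - γ) < 1 ∧ 1 + ε + β * -γ = -(1 + δ + δ) := by
  have h1γ : 0 < 1 - γ := by linarith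
  set δ := (γ / (1 - γ) - 2 - ε) / 4
  have hδ : 0 < δ := by positivity
  refine ⟨(2 + ε + 2 * δ) / γ, δ, hδ, ?_, by field_simp; ring⟩
  have : γ = (2 + ε + 4 * δ) * (1 - γ) := by simp only [δ]; field_simp; ring
  rw [div_mul_eq_mul_div, div_lt_one hγ₀]
  nlinarith

lemma measurable_card_filter_mem {Ω ι : Type*} {m : MeasurableSpace Ω} {s : ι → Set Ω}
    (S : Finset ι) [∀ i, DecidablePred (· ∈ s i)] (hs : ∀ i ∈ S, MeasurableSet[m] (s i)) :
    Measurable[m] fun ω => #{i ∈ S | ω ∈ s i} := by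
  simp_rw [card_filter]
  exact measurable_sum _ fun i hi => Measurable.ite (hs i hi) measurable_const measurable_const

section SuccessCount

variable {Ω : Type*} (s : ℕ → Set Ω) [∀ m, DecidablePred (· ∈ s m)]

def successCount (t : ℕ) (ω : Ω) : ℕ := #{m ∈ Icc 1 t | ω ∈ s m}

/-- On the event of infinitely many successes this is `{τ_n = t}` (see `successCount_growthTime`);
unlike that event, it visibly depends on the first `t` trials only. -/
def nthSuccessAt (n t : ℕ) : Set Ω := {ω | ω ∈ s t ∧ successCount s t ω = n}

variable {s}

lemma successCount_mono (ω : Ω) : Monotone (successCount s · ω) := fun _ _ hab =>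
  card_le_card <| filter_subset_filter _ <| Icc_subset_Icc_right hab

lemma successCount_lt_of_mem {ω : Ω} {a b : ℕ} (hab : a < b) (hb : ω ∈ s b) :
    successCount s a ω < successCount s b ω := by
  refine card_lt_card <| (ssubset_iff_of_subset ?_).2 ⟨b, ?_, ?_⟩
  · exact filter_subset_filter _ <| Icc_subset_Icc_right hab.le
  · simp only [mem_filter, mem_Icc]; exact ⟨⟨by omega, le_rfl⟩, hb⟩
  · simp only [mem_filter, mem_Icc]; omega

lemma successCount_eq_add_one {ω : Ω} {a b : ℕ} (hab : a < b) (hb : ω ∈ s b)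
    (hgap : ∀ m, a < m → m < b → ω ∉ s m) :
    successCount s b ω = successCount s a ω + 1 := by
  have : {m ∈ Icc 1 b | ω ∈ s m} = insert b {m ∈ Icc 1 a | ω ∈ s m} := by
    ext m
    simp only [mem_filter, mem_Icc, mem_insert]
    constructor
    · rintro ⟨⟨h1, h2⟩, hm⟩
      by_cases hmb : m = b
      · exact .inl hmb
      · exact .inr ⟨⟨h1, not_lt.1 fun h => hgap m h (by omega) hm⟩, hm⟩
    · rintro (rfl | ⟨⟨h1, h2⟩, hm⟩)
      · exact ⟨⟨by omega, le_rfl⟩, hb⟩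
      · exact ⟨⟨h1, by omega⟩, hm⟩
  rw [successCount, this, card_insert_of_notMem (by simp only [mem_filter, mem_Icc]; omega)]
  rfl

lemma pairwise_disjoint_nthSuccessAt (n : ℕ) : Pairwise (Disjoint on nthSuccessAt s n) :=
  (pairwise_disjoint_on _).2 fun _ _ hab => Set.disjoint_left.2 fun _ ha hb =>
    (successCount_lt_of_mem hab hb.1).ne (ha.2.trans hb.2.symm)

lemma measurableSet_nthSuccessAt_generateFrom (n t : ℕ) :
    MeasurableSet[MeasurableSpace.generateFrom {u | ∃ k ∈ Set.Iic t, s k = u}]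
      (nthSuccessAt s n t) := by
  have hs : ∀ k ≤ t,
      MeasurableSet[MeasurableSpace.generateFrom {u | ∃ k ∈ Set.Iic t, s k = u}] (s k) :=
    fun k hk => MeasurableSpace.measurableSet_generateFrom ⟨k, hk, rfl⟩
  exact (hs t le_rfl).inter <| measurable_card_filter_mem _
    (fun k hk => hs k (mem_Icc.1 hk).2) (measurableSet_singleton n)

end SuccessCount

section GrowthTime

variable {Ω : Type*} {Z : ℕ → Ω → ℕ} {ω : Ω}

lemma growthTime_lt_succ_and_eq_one (hZ : ∃ᶠ m in atTop, Z m ω = 1) (k : ℕ) :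
    growthTime Z k ω < growthTime Z (k + 1) ω ∧ Z (growthTime Z (k + 1) ω) ω = 1 := by
  obtain ⟨m, hm, hZm⟩ := frequently_atTop.1 hZ (growthTime Z k ω + 1)
  exact Nat.sInf_mem (s := {n | growthTime Z k ω < n ∧ Z n ω = 1}) ⟨m, hm, hZm⟩

lemma ne_one_of_lt_growthTime_succ {k m : ℕ} (hkm : growthTime Z k ω < m)
    (hm : m < growthTime Z (k + 1) ω) : Z m ω ≠ 1 :=
  fun hZm => Nat.notMem_of_lt_sInf hm ⟨hkm, hZm⟩

lemma successCount_growthTime (hZ : ∃ᶠ m in atTop, Z m ω = 1) (k : ℕ) :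
    successCount (fun m => {x | Z m x = 1}) (growthTime Z k ω) ω = k := by
  induction k with
  | zero => simp [successCount, growthTime]
  | succ k ih =>
    obtain ⟨hlt, hZk⟩ := growthTime_lt_succ_and_eq_one hZ k
    rw [successCount_eq_add_one (s := fun m => {x | Z m x = 1}) hlt hZk
      fun m h₁ h₂ => ne_one_of_lt_growthTime_succ h₁ h₂, ih]

lemma le_successCount_or_mem_of_growthTime_sub_le (hZ : ∃ᶠ m in atTop, Z m ω = 1)
    {n : ℕ} (hn : 1 ≤ n) (T L : ℕ) (hL : growthTime Z (n + 1) ω - growthTime Z n ω ≤ L) :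
    n ≤ successCount (fun m => {x | Z m x = 1}) T ω ∨
      ω ∈ ⋃ t > T, nthSuccessAt (fun m => {x | Z m x = 1}) n t ∩
        ⋃ m ∈ Ioc t (t + L), {x | Z m x = 1} := by
  have hcount := successCount_growthTime hZ n
  obtain ⟨hlt, hZnext⟩ := growthTime_lt_succ_and_eq_one hZ n
  rcases le_or_gt (growthTime Z n ω) T with htT | hTt
  · exact .inl (hcount ▸ successCount_mono ω htT)
  refine .inr <| Set.mem_biUnion hTt ⟨⟨?_, hcount⟩, Set.mem_biUnion ?_ hZnext⟩
  · obtain ⟨n, rfl⟩ := Nat.exists_eq_add_of_le' hn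
    exact (growthTime_lt_succ_and_eq_one hZ n).2
  · rw [coe_Ioc, Set.mem_Ioc]; omega

end GrowthTime

section Independence

variable {Ω ι : Type*} [MeasurableSpace Ω] {μ : Measure Ω}

lemma ProbabilityTheory.iIndepFun.iIndepSet_preimage {β : Type*} [MeasurableSpace β]
    {X : ι → Ω → β} (hX : iIndepFun X μ) (hXm : ∀ i, Measurable (X i)) {A : ι → Set β}
    (hA : ∀ i, MeasurableSet (A i)) : iIndepSet (fun i => X i ⁻¹' A i) μ :=
  (iIndepSet_iff_meas_biInter fun i => hXm i (hA i)).2 fun _ =>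
    hX.meas_biInter fun i _ => ⟨A i, hA i, rfl⟩

lemma ProbabilityTheory.iIndepSet.ae_frequently_mem {s : ℕ → Set Ω}
    (hsm : ∀ n, MeasurableSet (s n)) (hs : iIndepSet s μ) (hsum : ∑' n, μ (s n) = ∞) :
    ∀ᵐ ω ∂μ, ∃ᶠ n in atTop, ω ∈ s n := by
  have := hs.isProbabilityMeasure
  have hmeas : MeasurableSet (limsup s atTop) := by
    rw [limsup_eq_iInf_iSup_of_nat]
    exact .iInter fun n => .iUnion fun i => .iUnion fun _ => hsm i
  have h := measure_limsup_eq_one hsm hs hsum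
  rw [← prob_compl_eq_zero_iff hmeas] at h
  refine ae_iff.2 ?_
  simpa [Set.compl_def, mem_limsup_iff_frequently_mem] using h

lemma mgf_indicator_one [IsProbabilityMeasure μ] {s : Set Ω} (hs : MeasurableSet s) (t : ℝ) :
    mgf (s.indicator fun _ => (1 : ℝ)) μ t = 1 + (Real.exp t - 1) * μ.real s := by
  have hpt : (fun ω => Real.exp (t * s.indicator (fun _ => (1 : ℝ)) ω)) =
      fun ω => 1 + s.indicator (fun _ => Real.exp t - 1) ω := by
    ext ω; by_cases h : ω ∈ s <;> simp [h]
  rw [mgf, hpt, integral_add (integrable_const 1) ((integrable_const _).indicator hs),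
    integral_indicator_const _ hs]
  simp [mul_comm]

lemma ProbabilityTheory.iIndepSet.measure_le_card_filter_le {s : ι → Set Ω}
    (hsm : ∀ i, MeasurableSet (s i)) (hs : iIndepSet s μ) (S : Finset ι)
    [∀ i, DecidablePred (· ∈ s i)] (a : ℝ) :
    μ {ω | a ≤ #{i ∈ S | ω ∈ s i}} ≤
      ENNReal.ofReal (Real.exp (-a + (Real.exp 1 - 1) * ∑ i ∈ S, μ.real (s i))) := by
  have := hs.isProbabilityMeasure
  set X : ι → Ω → ℝ := fun i => (s i).indicator fun _ => 1
  have hXm : ∀ i, Measurable (X i) := fun i => measurable_const.indicator (hsm i)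
  have hcard : ∀ ω, (#{i ∈ S | ω ∈ s i} : ℝ) = (∑ i ∈ S, X i) ω := by
    intro ω; rw [natCast_card_filter, Finset.sum_apply]; simp [X, Set.indicator_apply]
  have hint : Integrable (fun ω => Real.exp (1 * (∑ i ∈ S, X i) ω)) μ := by
    refine Integrable.of_bound (C := Real.exp #S) ?_ (Eventually.of_forall fun ω => ?_)
    · simp only [Finset.sum_apply]; fun_prop
    · rw [Real.norm_of_nonneg (Real.exp_nonneg _), one_mul, ← hcard]
      gcongr; exact filter_subset _ _
  have hmgf :
      mgf (∑ i ∈ S, X i) μ 1 ≤ Real.exp ((Real.exp 1 - 1) * ∑ i ∈ S, μ.real (s i)) := by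
    rw [hs.iIndepFun_indicator.mgf_sum hXm, mul_sum, Real.exp_sum]
    refine prod_le_prod (fun i _ => mgf_nonneg) fun i _ => ?_
    rw [mgf_indicator_one (hsm i)]
    linarith [Real.add_one_le_exp ((Real.exp 1 - 1) * μ.real (s i))]
  rw [← ofReal_measureReal]
  refine ENNReal.ofReal_le_ofReal ?_
  calc μ.real {ω | a ≤ #{i ∈ S | ω ∈ s i}}
      = μ.real {ω | a ≤ (∑ i ∈ S, X i) ω} := by simp_rw [hcard]
    _ ≤ Real.exp (-1 * a) * mgf (∑ i ∈ S, X i) μ 1 :=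
      measure_ge_le_exp_mul_mgf a zero_le_one hint
    _ ≤ Real.exp (-1 * a) * Real.exp ((Real.exp 1 - 1) * ∑ i ∈ S, μ.real (s i)) := by gcongr
    _ = _ := by rw [← Real.exp_add, neg_one_mul]

variable {s : ℕ → Set Ω} [∀ m, DecidablePred (· ∈ s m)]

lemma ProbabilityTheory.iIndepSet.measure_nthSuccessAt_inter_le (hsm : ∀ m, MeasurableSet (s m))
    (hs : iIndepSet s μ) (n t L : ℕ) :
    μ (nthSuccessAt s n t ∩ ⋃ m ∈ Ioc t (t + L), s m) ≤
      μ (nthSuccessAt s n t) * ∑ m ∈ Ioc t (t + L), μ (s m) := by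
  have hindep := hs.indep_generateFrom_of_disjoint hsm (Set.Iic t) (Set.Ioi t)
    (Set.Iic_disjoint_Ioi le_rfl)
  rw [(Indep_iff _ _ μ).1 hindep _ _ (measurableSet_nthSuccessAt_generateFrom n t)
    (Finset.measurableSet_biUnion _ fun m hm => MeasurableSpace.measurableSet_generateFrom
      ⟨m, (mem_Ioc.1 hm).1, rfl⟩)]
  gcongr
  exact measure_biUnion_finset_le _ _

lemma ProbabilityTheory.iIndepSet.measure_iUnion_nthSuccessAt_inter_le
    (hsm : ∀ m, MeasurableSet (s m)) (hs : iIndepSet s μ) (n T L : ℕ) {q : ℝ≥0∞}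
    (hq : ∀ m, T < m → μ (s m) ≤ q) :
    μ (⋃ t > T, nthSuccessAt s n t ∩ ⋃ m ∈ Ioc t (t + L), s m) ≤ L * q := by
  have := hs.isProbabilityMeasure
  have hmeas : ∀ t, MeasurableSet (nthSuccessAt s n t) := fun t =>
    MeasurableSpace.generateFrom_le (by rintro _ ⟨k, -, rfl⟩; exact hsm k) _
      (measurableSet_nthSuccessAt_generateFrom n t)
  have hterm : ∀ t, μ (⋃ (_ : t > T), nthSuccessAt s n t ∩ ⋃ m ∈ Ioc t (t + L), s m) ≤
      μ (nthSuccessAt s n t) * (L * q) := by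
    intro t
    by_cases hTt : T < t
    · simp only [hTt, Set.iUnion_true]
      refine (hs.measure_nthSuccessAt_inter_le hsm n t L).trans ?_
      gcongr
      calc ∑ m ∈ Ioc t (t + L), μ (s m) ≤ ∑ m ∈ Ioc t (t + L), q :=
            sum_le_sum fun m hm => hq m (hTt.trans (mem_Ioc.1 hm).1)
        _ = L * q := by simp
    · simp [hTt]
  calc μ (⋃ t > T, nthSuccessAt s n t ∩ ⋃ m ∈ Ioc t (t + L), s m)
      ≤ ∑' t, μ (nthSuccessAt s n t) * (L * q) :=
        (measure_iUnion_le _).trans (ENNReal.tsum_le_tsum hterm)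
    _ = μ (⋃ t, nthSuccessAt s n t) * (L * q) := by
      rw [ENNReal.tsum_mul_right, measure_iUnion (pairwise_disjoint_nthSuccessAt n) hmeas]
    _ ≤ L * q := mul_le_of_le_one_left' prob_le_one

end Independence

section GrowthIncrement

variable {Ω : Type*} [MeasurableSpace Ω] {μ : Measure Ω} {Z : ℕ → Ω → ℕ}

lemma measure_growthTime_sub_le_le (hZmeas : ∀ k, Measurable (Z k)) (hZindep : iIndepFun Z μ)
    (hsum : ∑' m, μ {ω | Z m ω = 1} = ∞) {n : ℕ} (hn : 1 ≤ n) (T L : ℕ)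
    {q : ℝ≥0∞}    (hq : ∀ m, T < m → μ {ω | Z m ω = 1} ≤ q) :
    μ {ω | growthTime Z (n + 1) ω - growthTime Z n ω ≤ L} ≤
      ENNReal.ofReal (Real.exp (-n + (Real.exp 1 - 1) *
        ∑ k ∈ Icc 1 T, μ.real {ω | Z k ω = 1})) + L * q := by
  have hsm : ∀ m, MeasurableSet {ω | Z m ω = 1} := fun m => hZmeas m (measurableSet_singleton 1)
  have hs : iIndepSet (fun m => {ω | Z m ω = 1}) μ :=
    hZindep.iIndepSet_preimage hZmeas fun _ => measurableSet_singleton 1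
  have hinf : ∀ᵐ ω ∂μ, ∃ᶠ m in atTop, Z m ω = 1 := hs.ae_frequently_mem hsm hsum
  calc μ {ω | growthTime Z (n + 1) ω - growthTime Z n ω ≤ L}
      ≤ μ ({ω | (n : ℝ) ≤ successCount (fun m => {x | Z m x = 1}) T ω} ∪
          ⋃ t > T, nthSuccessAt (fun m => {x | Z m x = 1}) n t ∩
            ⋃ m ∈ Ioc t (t + L), {x | Z m x = 1}) := by
        refine measure_mono_ae <| hinf.mono fun ω hω hL => ?_
        rcases le_successCount_or_mem_of_growthTime_sub_le hω hn T L hL with h | h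
        · exact .inl (by exact_mod_cast h)
        · exact .inr h
    _ ≤ _ := (measure_union_le _ _).trans <| add_le_add
        (hs.measure_le_card_filter_le hsm (Icc 1 T) n)
        (hs.measure_iUnion_nthSuccessAt_inter_le hsm n T L hq)

lemma measure_growthTime_sub_le_le_of_rpow {γ : ℝ} (hγ₀ : 0 < γ) (hγ₁ : γ < 1)
    (hZmeas : ∀ k, Measurable (Z k)) (hZindep : iIndepFun Z μ)
    (hZone : ∀ k : ℕ, 1 ≤ k → μ {ω | Z k ω = 1} = ENNReal.ofReal ((k : ℝ) ^ (-γ)))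
    {n : ℕ} (hn : 1 ≤ n) {b ℓ : ℝ} (hb : 0 < b) (hℓ : 0 ≤ ℓ) :
    μ {ω | ((growthTime Z (n + 1) ω - growthTime Z n ω : ℕ) : ℝ) ≤ ℓ} ≤
      ENNReal.ofReal
        (Real.exp (-n + (Real.exp 1 - 1) / (1 - γ) * b ^ (1 - γ)) + ℓ * b ^ (-γ)) := by
  have hle : ∀ k : ℕ, ENNReal.ofReal ((k : ℝ) ^ (-γ)) ≤ μ {ω | Z k ω = 1} := by
    rintro (_ | k)
    · simp [Real.zero_rpow (neg_ne_zero.2 hγ₀.ne')]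
    · exact (hZone _ k.succ_pos).ge
  have hsum : ∑' m, μ {ω | Z m ω = 1} = ∞ := top_unique <|
    (tsum_ofReal_natCast_rpow_neg_eq_top hγ₁.le).ge.trans (ENNReal.tsum_le_tsum hle)
  have hq : ∀ m, ⌊b⌋₊ < m → μ {ω | Z m ω = 1} ≤ ENNReal.ofReal (b ^ (-γ)) := by
    intro m hm
    rw [hZone m (by omega)]
    refine ENNReal.ofReal_le_ofReal (Real.rpow_le_rpow_of_nonpos hb ?_ (by linarith))
    exact (Nat.lt_floor_add_one b).le.trans (by exact_mod_cast hm)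
  have hreal :
      ∑ k ∈ Icc 1 ⌊b⌋₊, μ.real {ω | Z k ω = 1} ≤ b ^ (1 - γ) / (1 - γ) := by
    rw [sum_congr rfl fun k hk => by rw [measureReal_def, hZone k (mem_Icc.1 hk).1,
      ENNReal.toReal_ofReal (by positivity)]]
    refine (sum_Icc_rpow_neg_le hγ₀.le hγ₁ _).trans ?_
    have := Real.rpow_le_rpow (Nat.cast_nonneg _) (Nat.floor_le hb.le) (by linarith : 0 ≤ 1 - γ)
    exact div_le_div_of_nonneg_right this (by linarith)
  refine (measure_mono fun ω hω => Nat.le_floor hω).trans <|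
    (measure_growthTime_sub_le_le hZmeas hZindep hsum hn ⌊b⌋₊ ⌊ℓ⌋₊ hq).trans ?_
  rw [← ENNReal.ofReal_natCast, ← ENNReal.ofReal_mul (by positivity),
    ← ENNReal.ofReal_add (by positivity) (by positivity)]
  refine ENNReal.ofReal_le_ofReal (add_le_add (Real.exp_le_exp.2 ?_) ?_)
  · have := mul_le_mul_of_nonneg_left hreal (by linarith [Real.add_one_le_exp 1] :
      0 ≤ Real.exp 1 - 1)
    rw [div_mul_eq_mul_div, mul_div_assoc]
    linarith
  · exact mul_le_mul_of_nonneg_right (Nat.floor_le hℓ) (by positivity)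

end GrowthIncrement

theorem growth_increment_tail_bound_general
    {Ω : Type*} [MeasurableSpace Ω] (μ : Measure Ω)
    (γ ε : ℝ) (hγ₁ : 2 / 3 < γ) (hγ₂ : γ < 1)
    (hε₂ : ε < γ / (1 - γ) - 2)
    (Z : ℕ → Ω → ℕ) (hZmeas : ∀ k, Measurable (Z k))
    (hZindep : iIndepFun Z μ)
    (hZone : ∀ k : ℕ, 1 ≤ k → μ {ω | Z k ω = 1} = ENNReal.ofReal ((k : ℝ) ^ (-γ))) :
    ∃ δ' : ℝ, 0 < δ' ∧ ∃ N : ℕ, ∀ n ≥ N,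
      μ {ω | ((growthTime Z (n + 1) ω - growthTime Z n ω : ℕ) : ℝ) ≤ (n : ℝ) ^ (1 + ε)}
        ≤ ENNReal.ofReal ((n : ℝ) ^ (-(1 + δ'))) := by
  have hγ₀ : 0 < γ := by linarith
  obtain ⟨β, δ, hδ, hβ, hβγ⟩ := exists_growth_exponents hγ₀ hγ₂ hε₂
  refine ⟨δ, hδ, ?_⟩
  obtain ⟨N, hN⟩ := eventually_atTop.1 <|
    (eventually_exp_neg_add_mul_rpow_le_rpow_neg hβ ((Real.exp 1 - 1) / (1 - γ))
      (1 + δ + δ)).and <|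
    (((tendsto_rpow_atTop hδ).comp tendsto_natCast_atTop_atTop).eventually_ge_atTop 2).and
      (eventually_ge_atTop 1)
  refine ⟨N, fun n hn => ?_⟩
  obtain ⟨hexp, htwo : 2 ≤ (n : ℝ) ^ δ, hn⟩ := hN n hn
  have hnpos : (0 : ℝ) < n := by exact_mod_cast hn
  refine (measure_growthTime_sub_le_le_of_rpow hγ₀ hγ₂ hZmeas hZindep hZone hn
    (Real.rpow_pos_of_pos hnpos β) (by positivity)).trans (ENNReal.ofReal_le_ofReal ?_)
  rw [← Real.rpow_mul hnpos.le, ← Real.rpow_mul hnpos.le, ← Real.rpow_add hnpos, hβγ]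
  linarith [two_mul_rpow_neg_add_le hnpos htwo (1 + δ)]

/-- **Increments of growth times are rarely small.**
Let `γ ∈ (2/3, 1)` and `0 < ε < γ/(1-γ) - 2`.  Let `(Z_k)_{k≥1}` be independent with
`P(Z_k = 1) = k^{-γ} = 1 - P(Z_k = 0)` and let `τ_k` be the growth times, `Δτ_k = τ_{k+1} - τ_k`.
Then there exists `δ' > 0` such that for all sufficiently large `n`,
`P(Δτ_n ≤ n^{1+ε}) ≤ n^{-(1+δ')}`. -/
theorem growth_increment_tail_bound
    {Ω : Type*} [MeasurableSpace Ω] (μ : Measure Ω) [IsProbabilityMeasure μ]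
    (γ ε : ℝ) (hγ₁ : 2 / 3 < γ) (hγ₂ : γ < 1)
    (hε₁ : 0 < ε) (hε₂ : ε < γ / (1 - γ) - 2)
    (Z : ℕ → Ω → ℕ) (hZmeas : ∀ k, Measurable (Z k))
    (hZindep : iIndepFun Z μ)
    (hZone : ∀ k : ℕ, 1 ≤ k → μ {ω | Z k ω = 1} = ENNReal.ofReal ((k : ℝ) ^ (-γ)))
    (hZzero : ∀ k : ℕ, 1 ≤ k → μ {ω | Z k ω = 0} = ENNReal.ofReal (1 - (k : ℝ) ^ (-γ))) :
    ∃ δ' : ℝ, 0 < δ' ∧ ∃ N : ℕ, ∀ n ≥ N,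
      μ {ω | ((growthTime Z (n + 1) ω - growthTime Z n ω : ℕ) : ℝ) ≤ (n : ℝ) ^ (1 + ε)}
        ≤ ENNReal.ofReal ((n : ℝ) ^ (-(1 + δ'))) :=
  growth_increment_tail_bound_general μ γ ε hγ₁ hγ₂ hε₂ Z hZmeas hZindep hZone
end
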